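/- arXiv:2502.17602 — 11 statements merged into one kernel-verified Lean document; each statement's English description precedes it below -/
import Mathlib

section
/- Let ζ be a Borel probability measure on ℝ^q with compact support contained in a nonempty compact set Z ⊆ ℝ^q, let Ψ : ℝ^m × ℝ^q → ℝ be continuous, and let ȳ ∈ ℝ^m be such that some maximizer of z ↦ Ψ(ȳ,z) over Z belongs to the support of ζ. Then the function (y, μ) ↦ μ · log ∫ e^{Ψ(y,z)/μ} dζ(z) tends to max_{z ∈ Z} Ψ(ȳ,z) as y → ȳ and μ → 0⁺ (i.e., along the product of the neighborhood filter of ȳ and the right-neighborhood filter of 0). -/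
open MeasureTheory Filter Real Set

/-- The (topological) support of a measure: points all of whose neighborhoods have
positive measure. -/
def msupport {E : Type*} [TopologicalSpace E] [MeasurableSpace E] (ζ : Measure E) : Set E :=
  {x | ∀ U ∈ nhds x, 0 < ζ U}

/-- joint convergence of the log-sum-exp smoothing
`(y, μ) ↦ μ · log ∫ e^{Ψ(y,z)/μ} dζ(z)` to `max_{z ∈ Z} Ψ(ȳ, z)` as `y → ȳ`, `μ → 0⁺`. -/
theorem logSumExp_smoothing_tendsto_max {m q : ℕ}
    (Z : Set (EuclideanSpace ℝ (Fin q))) (hZc : IsCompact Z) (hZne : Z.Nonempty)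
    (ζ : Measure (EuclideanSpace ℝ (Fin q))) [IsProbabilityMeasure ζ]
    (hsuppZ : msupport ζ ⊆ Z)
    (Ψ : EuclideanSpace ℝ (Fin m) → EuclideanSpace ℝ (Fin q) → ℝ)
    (hΨ : Continuous fun p : EuclideanSpace ℝ (Fin m) × EuclideanSpace ℝ (Fin q) => Ψ p.1 p.2)
    (ybar : EuclideanSpace ℝ (Fin m))
    (z₀ : EuclideanSpace ℝ (Fin q)) (hz₀Z : z₀ ∈ Z) (hz₀supp : z₀ ∈ msupport ζ)
    (hz₀max : ∀ z ∈ Z, Ψ ybar z ≤ Ψ ybar z₀) :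
    Tendsto (fun p : EuclideanSpace ℝ (Fin m) × ℝ =>
        p.2 * Real.log (∫ z, Real.exp (Ψ p.1 z / p.2) ∂ζ))
      ((nhds ybar) ×ˢ (nhdsWithin 0 (Set.Ioi (0 : ℝ))))
      (nhds (sSup ((fun z => Ψ ybar z) '' Z))) := by
  set M : ℝ := Ψ ybar z₀ with hM
  have hMs : sSup ((fun z => Ψ ybar z) '' Z) = M := by
    apply IsGreatest.csSup_eq
    exact ⟨⟨z₀, hz₀Z, rfl⟩, by rintro x ⟨z, hz, rfl⟩; exact hz₀max z hz⟩
  rw [hMs]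
  -- a.e. membership in Z
  have hZnull : ζ Zᶜ = 0 := by
    apply measure_null_of_locally_null
    intro x hx
    have hx' : ¬ ∀ U ∈ nhds x, 0 < ζ U := fun h => hx (hsuppZ h)
    simp only [not_forall] at hx'
    obtain ⟨U, hU, hU0⟩ := hx'
    exact ⟨U, nhdsWithin_le_nhds hU, by simpa [pos_iff_ne_zero, not_not] using hU0⟩
  have haeZ : ∀ᵐ z ∂ζ, z ∈ Z := by
    rw [MeasureTheory.ae_iff]
    exact hZnull
  rw [Metric.tendsto_nhds]
  intro ε hε
  -- neighborhood for the lower bound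
  have hcont : ContinuousAt (fun p : _ × _ => Ψ p.1 p.2) (ybar, z₀) := hΨ.continuousAt
  have hlow : ∀ᶠ p : _ × _ in nhds (ybar, z₀), M - ε/2 < Ψ p.1 p.2 :=
    hcont.eventually (eventually_gt_nhds (by linarith))
  rw [nhds_prod_eq, Filter.eventually_prod_iff] at hlow
  obtain ⟨pa, hpa, pb, hpb, hpab⟩ := hlow
  obtain ⟨U, hUsub, hUopen, hz₀U⟩ := mem_nhds_iff.mp hpb
  set c : ℝ := (ζ U).toReal with hc
  have hcpos : 0 < c :=
    ENNReal.toReal_pos (hz₀supp U (hUopen.mem_nhds hz₀U)).ne' (measure_ne_top ζ U)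
  -- upper bound event
  have E1 : ∀ᶠ y in nhds ybar, ∀ z ∈ Z, Ψ y z < M + ε/2 := by
    apply hZc.eventually_forall_of_forall_eventually
    intro z hz
    exact hΨ.continuousAt.eventually (eventually_lt_nhds (by
      have := hz₀max z hz; linarith))
  have E4 : ∀ᶠ μ' in nhdsWithin (0:ℝ) (Set.Ioi 0), -(ε/2) < μ' * Real.log c := by
    have h0 : Tendsto (fun μ' : ℝ => μ' * Real.log c) (nhds 0) (nhds (0 * Real.log c)) :=
      (continuous_id.mul continuous_const).tendsto 0
    rw [zero_mul] at h0
    exact (h0.mono_left nhdsWithin_le_nhds).eventually (eventually_gt_nhds (by linarith))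
  have E3 : ∀ᶠ μ' in nhdsWithin (0:ℝ) (Set.Ioi 0), (0:ℝ) < μ' :=
    eventually_mem_nhdsWithin
  filter_upwards [Filter.Eventually.prod_mk (E1.and hpa) (E3.and E4)] with p hp
  obtain ⟨⟨h1, h2⟩, h3, h4⟩ := hp
  set y := p.1
  set μ' := p.2
  set f : EuclideanSpace ℝ (Fin q) → ℝ := fun z => Real.exp (Ψ y z / μ') with hf
  have hfc : Continuous f := by
    apply Real.continuous_exp.comp
    exact (hΨ.comp (Continuous.prodMk_right y)).div_const μ'
  have hfnn : (0:(EuclideanSpace ℝ (Fin q) → ℝ)) ≤ᵐ[ζ] f :=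
    Filter.Eventually.of_forall fun z => (Real.exp_pos _).le
  have hbd : ∀ᵐ z ∂ζ, ‖f z‖ ≤ Real.exp ((M + ε/2) / μ') := by
    filter_upwards [haeZ] with z hz
    rw [Real.norm_of_nonneg (Real.exp_pos _).le]
    exact Real.exp_le_exp.mpr ((div_le_div_iff_of_pos_right h3).mpr (h1 z hz).le)
  have hInt : Integrable f ζ :=
    (integrable_const (Real.exp ((M + ε/2) / μ'))).mono' hfc.aestronglyMeasurable hbd
  set I : ℝ := ∫ z, f z ∂ζ with hI
  have Ipos : 0 < I := by
    rw [hI, integral_pos_iff_support_of_nonneg_ae hfnn hInt]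
    have : Function.support f = Set.univ := by
      ext z; simp [hf, Real.exp_ne_zero]
    rw [this]
    simp
  -- upper bound
  have Ile : I ≤ Real.exp ((M + ε/2) / μ') := by
    have h := integral_mono_ae hInt (integrable_const (Real.exp ((M + ε/2) / μ')))
      (by filter_upwards [hbd] with z hz; rw [Real.norm_of_nonneg (Real.exp_pos _).le] at hz; exact hz)
    simpa using h
  have hlogup : Real.log I ≤ (M + ε/2) / μ' := (Real.log_le_iff_le_exp Ipos).mpr Ile
  have hup : μ' * Real.log I ≤ M + ε/2 := by
    have := mul_le_mul_of_nonneg_left hlogup h3.le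
    rwa [mul_comm μ' ((M + ε/2) / μ'), div_mul_cancel₀ _ h3.ne'] at this
  -- lower bound
  have hset1 : ∫ z in U, f z ∂ζ ≤ I := setIntegral_le_integral hInt hfnn
  have hset2 : c * Real.exp ((M - ε/2) / μ') ≤ ∫ z in U, f z ∂ζ := by
    have h := setIntegral_mono_on ((integrable_const (Real.exp ((M - ε/2) / μ'))).integrableOn)
      hInt.integrableOn hUopen.measurableSet
      (fun z hz => Real.exp_le_exp.mpr ((div_le_div_iff_of_pos_right h3).mpr (hpab h2 (hUsub hz)).le))
    rwa [setIntegral_const, smul_eq_mul] at h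
  have hcle : c * Real.exp ((M - ε/2) / μ') ≤ I := hset2.trans hset1
  have hloglow : Real.log c + (M - ε/2) / μ' ≤ Real.log I := by
    have h := Real.log_le_log (mul_pos hcpos (Real.exp_pos _)) hcle
    rwa [Real.log_mul hcpos.ne' (Real.exp_ne_zero _), Real.log_exp] at h
  have hlow2 : M - ε < μ' * Real.log I := by
    have h := mul_le_mul_of_nonneg_left hloglow h3.le
    rw [mul_add, mul_comm μ' ((M - ε/2) / μ'), div_mul_cancel₀ _ h3.ne'] at h
    linarith
  rw [Real.dist_eq, abs_lt]
  constructor <;> [linarith; linarith]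
end

section
/- Let ζ be a Borel probability measure on ℝ^q with compact support and let f : ℝ^q → ℝ be continuous. Then μ · log ∫ e^{f(z)/μ} dζ(z) − (∫ e^{f(z)/μ} f(z) dζ(z)) / (∫ e^{f(z)/μ} dζ(z)) tends to 0 as μ → 0⁺. -/
open MeasureTheory Filter Real Set

/-- `μ · log ∫ e^{f/μ} dζ − (∫ e^{f/μ} f dζ)/(∫ e^{f/μ} dζ) → 0` as `μ → 0⁺`. -/
theorem logSumExp_sub_gibbs_tendsto_zero {q : ℕ}
    (ζ : Measure (EuclideanSpace ℝ (Fin q))) [IsProbabilityMeasure ζ]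
    (hc : IsCompact (msupport ζ))
    (f : EuclideanSpace ℝ (Fin q) → ℝ) (hf : Continuous f) :
    Tendsto (fun μ : ℝ =>
        μ * Real.log (∫ z, Real.exp (f z / μ) ∂ζ)
          - (∫ z, Real.exp (f z / μ) * f z ∂ζ) / (∫ z, Real.exp (f z / μ) ∂ζ))
      (nhdsWithin 0 (Set.Ioi (0 : ℝ)))
      (nhds 0) := by
  classical
  set K := msupport ζ with hKdef
  -- almost every point is in the support
  have hKm : ∀ᵐ z ∂ζ, z ∈ K := by
    rw [ae_iff]
    refine measure_null_of_locally_null _ (fun x hx => ?_)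
    simp only [mem_setOf_eq, hKdef, msupport, not_forall] at hx
    obtain ⟨U, hU, hU0⟩ := hx
    exact ⟨U, mem_nhdsWithin_of_mem_nhds hU, by simpa using hU0⟩
  have hKne : K.Nonempty := by
    by_contra h
    rw [not_nonempty_iff_eq_empty] at h
    have h1 : (ζ {a | ¬ a ∈ K}) = 0 := ae_iff.mp hKm
    rw [h] at h1
    simp at h1
  obtain ⟨x₀, hx₀K, hmax⟩ := hc.exists_isMaxOn hKne hf.continuousOn
  set M := f x₀ with hMdef
  have hfM : ∀ z ∈ K, f z ≤ M := fun z hz => hmax hz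
  -- bound on f over K
  obtain ⟨C, hC⟩ := hc.exists_bound_of_continuousOn hf.continuousOn
  -- the shifted integrals
  set It : ℝ → ℝ := fun μ => ∫ z, Real.exp ((f z - M) / μ) ∂ζ with hItdef
  set Jt : ℝ → ℝ := fun μ => ∫ z, Real.exp ((f z - M) / μ) * (M - f z) ∂ζ with hJtdef
  have hcont1 : ∀ μ : ℝ, Continuous fun z => Real.exp ((f z - M) / μ) :=
    fun μ => ((hf.sub continuous_const).div_const μ).rexp
  have hint1 : ∀ μ : ℝ, 0 < μ → Integrable (fun z => Real.exp ((f z - M) / μ)) ζ := by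
    intro μ hμ
    refine (integrable_const (1 : ℝ)).mono' (hcont1 μ).aestronglyMeasurable ?_
    filter_upwards [hKm] with z hz
    rw [Real.norm_eq_abs, abs_of_pos (Real.exp_pos _)]
    exact Real.exp_le_one_iff.mpr (div_nonpos_of_nonpos_of_nonneg (by linarith [hfM z hz]) hμ.le)
  have hint2 : ∀ μ : ℝ, 0 < μ →
      Integrable (fun z => Real.exp ((f z - M) / μ) * (M - f z)) ζ := by
    intro μ hμ
    refine (integrable_const (|M| + C)).mono'
      ((hcont1 μ).mul (continuous_const.sub hf)).aestronglyMeasurable ?_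
    filter_upwards [hKm] with z hz
    have h1 : Real.exp ((f z - M) / μ) ≤ 1 :=
      Real.exp_le_one_iff.mpr (div_nonpos_of_nonpos_of_nonneg (by linarith [hfM z hz]) hμ.le)
    have h2 : |M - f z| ≤ |M| + C := by
      have h3 := hC z hz
      rw [Real.norm_eq_abs] at h3
      calc |M - f z| ≤ |M| + |f z| := abs_sub _ _
        _ ≤ |M| + C := by linarith
    rw [Real.norm_eq_abs, abs_mul, abs_of_pos (Real.exp_pos _)]
    calc Real.exp ((f z - M) / μ) * |M - f z| ≤ 1 * (|M| + C) :=
          mul_le_mul h1 h2 (abs_nonneg _) one_pos.le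
      _ = |M| + C := one_mul _
  have hItpos : ∀ μ : ℝ, 0 < μ → 0 < It μ := by
    intro μ hμ
    simp only [hItdef]
    rw [integral_pos_iff_support_of_nonneg (fun z => (Real.exp_pos _).le) (hint1 μ hμ)]
    have h : (Function.support fun z => Real.exp ((f z - M) / μ)) = univ :=
      eq_univ_of_forall fun z => (Real.exp_pos _).ne'
    rw [h]
    simp
  have hItle1 : ∀ μ : ℝ, 0 < μ → It μ ≤ 1 := by
    intro μ hμ
    have h : It μ ≤ ∫ _, (1 : ℝ) ∂ζ := by
      refine integral_mono_ae (hint1 μ hμ) (integrable_const 1) ?_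
      filter_upwards [hKm] with z hz
      exact Real.exp_le_one_iff.mpr (div_nonpos_of_nonpos_of_nonneg (by linarith [hfM z hz]) hμ.le)
    simpa using h
  have hJtnn : ∀ μ : ℝ, 0 < μ → 0 ≤ Jt μ := by
    intro μ hμ
    refine integral_nonneg_of_ae ?_
    filter_upwards [hKm] with z hz
    exact mul_nonneg (Real.exp_pos _).le (by linarith [hfM z hz])
  -- lower bound on It
  have hlow : ∀ ε : ℝ, 0 < ε → ∃ c : ℝ, 0 < c ∧ ∀ μ : ℝ, 0 < μ →
      Real.exp (-ε / μ) * c ≤ It μ := by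
    intro ε hε
    set A := f ⁻¹' Ioi (M - ε) with hAdef
    have hAopen : IsOpen A := isOpen_Ioi.preimage hf
    have hx₀A : x₀ ∈ A := by
      simp only [hAdef, mem_preimage, mem_Ioi, ← hMdef]
      linarith
    have hζA : 0 < ζ A := hx₀K A (hAopen.mem_nhds hx₀A)
    refine ⟨(ζ A).toReal, ENNReal.toReal_pos hζA.ne' (measure_ne_top ζ A), fun μ hμ => ?_⟩
    have hind : ∀ z, A.indicator (fun _ => Real.exp (-ε / μ)) z ≤ Real.exp ((f z - M) / μ) := by
      intro z
      by_cases hz : z ∈ A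
      · rw [indicator_of_mem hz]
        refine Real.exp_le_exp.mpr ((div_le_div_iff_of_pos_right hμ).mpr ?_)
        have h : M - ε < f z := hz
        linarith
      · rw [indicator_of_notMem hz]
        exact (Real.exp_pos _).le
    calc Real.exp (-ε / μ) * (ζ A).toReal
        = ∫ z, A.indicator (fun _ => Real.exp (-ε / μ)) z ∂ζ := by
          rw [integral_indicator_const _ hAopen.measurableSet, smul_eq_mul, mul_comm]; rfl
      _ ≤ It μ := integral_mono
          ((integrable_const _).indicator hAopen.measurableSet) (hint1 μ hμ) hind
  -- Part 1 : μ log It → 0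
  have h1 : Tendsto (fun μ : ℝ => μ * Real.log (It μ)) (nhdsWithin 0 (Ioi 0)) (nhds 0) := by
    rw [tendsto_order]
    constructor
    · intro a ha
      obtain ⟨c, hcpos, hcb⟩ := hlow (-a / 2) (by linarith)
      have hmlc : Tendsto (fun μ : ℝ => μ * Real.log c) (nhdsWithin 0 (Ioi 0)) (nhds 0) := by
        have h : Tendsto (fun μ : ℝ => μ * Real.log c) (nhds 0) (nhds (0 * Real.log c)) :=
          (continuous_mul_right _).tendsto 0
        rw [zero_mul] at h
        exact h.mono_left nhdsWithin_le_nhds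
      have hev : ∀ᶠ μ in nhdsWithin (0:ℝ) (Ioi 0), a / 2 < μ * Real.log c :=
        hmlc.eventually (eventually_gt_nhds (by linarith))
      filter_upwards [hev, self_mem_nhdsWithin] with μ hμ1 hμ2
      have hμ : (0:ℝ) < μ := hμ2
      have hb : Real.exp ((a/2) / μ) * c ≤ It μ := by
        have h := hcb μ hμ
        rwa [show (-(-a/2) : ℝ) = a/2 by ring] at h
      have hlog : Real.log (Real.exp ((a/2) / μ) * c) ≤ Real.log (It μ) :=
        (Real.log_le_log_iff (mul_pos (Real.exp_pos _) hcpos) (hItpos μ hμ)).mpr hb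
      have hlogeq : Real.log (Real.exp ((a/2) / μ) * c) = a/2/μ + Real.log c := by
        rw [Real.log_mul (Real.exp_ne_zero _) hcpos.ne', Real.log_exp]
      calc a = a/2 + a/2 := by ring
        _ < a/2 + μ * Real.log c := by linarith
        _ = μ * (a/2/μ + Real.log c) := by field_simp
        _ ≤ μ * Real.log (It μ) := by
            refine mul_le_mul_of_nonneg_left ?_ hμ.le
            rw [← hlogeq]; exact hlog
    · intro a ha
      filter_upwards [self_mem_nhdsWithin] with μ hμ2
      have hμ : (0:ℝ) < μ := hμ2
      have h : μ * Real.log (It μ) ≤ 0 :=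
        mul_nonpos_of_nonneg_of_nonpos hμ.le
          (Real.log_nonpos (hItpos μ hμ).le (hItle1 μ hμ))
      linarith
  -- Part 2 : Jt / It → 0
  have h2 : Tendsto (fun μ : ℝ => Jt μ / It μ) (nhdsWithin 0 (Ioi 0)) (nhds 0) := by
    rw [tendsto_order]
    constructor
    · intro a ha
      filter_upwards [self_mem_nhdsWithin] with μ hμ2
      have hμ : (0:ℝ) < μ := hμ2
      exact lt_of_lt_of_le ha (div_nonneg (hJtnn μ hμ) (hItpos μ hμ).le)
    · intro a ha
      obtain ⟨c, hcpos, hcb⟩ := hlow (a/4) (by linarith)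
      have hbound : ∀ μ : ℝ, 0 < μ →
          Jt μ ≤ (a/2) * It μ + Real.exp (-(a/4) / μ) * (2*μ) := by
        intro μ hμ
        have hpt : ∀ᵐ z ∂ζ, Real.exp ((f z - M)/μ) * (M - f z)
            ≤ (a/2) * Real.exp ((f z - M)/μ) + Real.exp (-(a/4)/μ) * (2*μ) := by
          filter_upwards [hKm] with z hz
          set t := M - f z with ht
          have htnn : 0 ≤ t := by simp only [ht]; linarith [hfM z hz]
          have hexp_eq : (f z - M)/μ = -(t/μ) := by rw [ht]; ring
          by_cases hcase : t ≤ a/2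
          · have h : Real.exp ((f z - M)/μ) * t ≤ (a/2) * Real.exp ((f z - M)/μ) := by
              rw [mul_comm ((a:ℝ)/2) _]
              exact mul_le_mul_of_nonneg_left hcase (Real.exp_pos _).le
            have h2 : (0:ℝ) ≤ Real.exp (-(a/4)/μ) * (2*μ) :=
              mul_nonneg (Real.exp_pos _).le (by linarith)
            linarith
          · push_neg at hcase
            have key : Real.exp (-(t/(2*μ))) * t ≤ 2*μ := by
              rw [Real.exp_neg, inv_mul_le_iff₀ (Real.exp_pos _)]
              have h2μ : (0:ℝ) < 2*μ := by linarith
              have hE := mul_le_mul_of_nonneg_right (Real.add_one_le_exp (t/(2*μ))) h2μ.le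
              rw [add_mul, one_mul, div_mul_cancel₀ _ h2μ.ne'] at hE
              nlinarith [Real.exp_pos (t/(2*μ))]
            have hmono : Real.exp (-(t/(2*μ))) ≤ Real.exp (-(a/4)/μ) := by
              apply Real.exp_le_exp.mpr
              rw [show (-(a/4)/μ : ℝ) = -(a/(4*μ)) by ring, neg_le_neg_iff]
              rw [div_le_div_iff₀ (by linarith) (by linarith)]
              nlinarith
            have hsplit : Real.exp ((f z - M)/μ) * t
                = Real.exp (-(t/(2*μ))) * (Real.exp (-(t/(2*μ))) * t) := by
              rw [hexp_eq, ← mul_assoc, ← Real.exp_add]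
              congr 2
              ring
            have hle : Real.exp ((f z - M)/μ) * t ≤ Real.exp (-(a/4)/μ) * (2*μ) := by
              rw [hsplit]
              exact mul_le_mul hmono key (mul_nonneg (Real.exp_pos _).le htnn)
                (Real.exp_pos _).le
            have h2 : (0:ℝ) ≤ (a/2) * Real.exp ((f z - M)/μ) :=
              mul_nonneg (by linarith) (Real.exp_pos _).le
            linarith
        calc Jt μ ≤ ∫ z, ((a/2) * Real.exp ((f z - M)/μ) + Real.exp (-(a/4)/μ) * (2*μ)) ∂ζ :=
            integral_mono_ae (hint2 μ hμ)
              (((hint1 μ hμ).const_mul _).add (integrable_const _)) hpt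
          _ = (a/2) * It μ + Real.exp (-(a/4)/μ) * (2*μ) := by
            rw [integral_add ((hint1 μ hμ).const_mul _) (integrable_const _),
              integral_const_mul, integral_const]
            simp [hItdef]
      have hsmall : ∀ᶠ μ in nhdsWithin (0:ℝ) (Ioi 0), μ < a*c/4 := by
        have h : Ioo (0:ℝ) (a*c/4) ∈ nhdsWithin (0:ℝ) (Ioi 0) :=
          Ioo_mem_nhdsGT_of_mem ⟨le_refl 0, by positivity⟩
        filter_upwards [h] with μ hμ using hμ.2
      filter_upwards [hsmall, self_mem_nhdsWithin] with μ hμs hμ2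
      have hμ : (0:ℝ) < μ := hμ2
      have hIb := hcb μ hμ
      have hIpos := hItpos μ hμ
      have hd1 : Jt μ / It μ
          ≤ ((a/2) * It μ + Real.exp (-(a/4)/μ) * (2*μ)) / It μ :=
        (div_le_div_iff_of_pos_right hIpos).mpr (hbound μ hμ)
      have hd2 : ((a/2) * It μ + Real.exp (-(a/4)/μ) * (2*μ)) / It μ
          = a/2 + (Real.exp (-(a/4)/μ) * (2*μ)) / It μ := by
        rw [add_div, mul_div_assoc, div_self hIpos.ne', mul_one]
      have hd3 : (Real.exp (-(a/4)/μ) * (2*μ)) / It μ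
          ≤ (Real.exp (-(a/4)/μ) * (2*μ)) / (Real.exp (-(a/4)/μ) * c) :=
        div_le_div_of_nonneg_left (mul_nonneg (Real.exp_pos _).le (by linarith))
          (mul_pos (Real.exp_pos _) hcpos) hIb
      have hd4 : (Real.exp (-(a/4)/μ) * (2*μ)) / (Real.exp (-(a/4)/μ) * c) = 2*μ/c :=
        mul_div_mul_left _ _ (Real.exp_ne_zero _)
      have hlast : 2*μ/c < a/2 := by
        rw [div_lt_iff₀ hcpos]
        nlinarith
      calc Jt μ / It μ ≤ a/2 + (Real.exp (-(a/4)/μ) * (2*μ)) / It μ := by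
            rw [← hd2]; exact hd1
        _ ≤ a/2 + 2*μ/c := by rw [← hd4]; linarith [hd3]
        _ < a := by linarith
  -- the algebraic identity
  have heq : (fun μ : ℝ =>
        μ * Real.log (∫ z, Real.exp (f z / μ) ∂ζ)
          - (∫ z, Real.exp (f z / μ) * f z ∂ζ) / (∫ z, Real.exp (f z / μ) ∂ζ))
      =ᶠ[nhdsWithin (0:ℝ) (Ioi 0)]
      (fun μ : ℝ => μ * Real.log (It μ) + Jt μ / It μ) := by
    filter_upwards [self_mem_nhdsWithin] with μ hμ2
    have hμ : (0:ℝ) < μ := hμ2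
    have hIeq : (∫ z, Real.exp (f z / μ) ∂ζ) = Real.exp (M/μ) * It μ := by
      simp only [hItdef]
      rw [← integral_const_mul]
      refine integral_congr_ae (Eventually.of_forall fun z => ?_)
      show Real.exp (f z / μ) = Real.exp (M/μ) * Real.exp ((f z - M)/μ)
      rw [show f z / μ = M/μ + (f z - M)/μ from by ring, Real.exp_add]
    have hJeq : (∫ z, Real.exp (f z / μ) * f z ∂ζ)
        = Real.exp (M/μ) * (M * It μ - Jt μ) := by
      have hpt : ∀ z, Real.exp (f z / μ) * f z
          = Real.exp (M/μ) * (M * Real.exp ((f z - M)/μ)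
              - Real.exp ((f z - M)/μ) * (M - f z)) := by
        intro z
        rw [show f z / μ = M/μ + (f z - M)/μ from by ring, Real.exp_add]
        ring
      simp only [hpt]
      rw [integral_const_mul,
        integral_sub ((hint1 μ hμ).const_mul M) (hint2 μ hμ), integral_const_mul]
    have hIt := hItpos μ hμ
    rw [hIeq, hJeq, Real.log_mul (Real.exp_ne_zero _) hIt.ne', Real.log_exp,
      mul_div_mul_left _ _ (Real.exp_ne_zero _)]
    field_simp
    try ring
  have hsum := h1.add h2
  rw [add_zero] at hsum
  exact hsum.congr' heq.symm
end

section
/- Let ζ be a Borel probability measure on ℝ^q with compact support, let Ψ : ℝ^m × ℝ^q → ℝ be continuous, suppose that for each z in the support of ζ the map y ↦ Ψ(y,z) is differentiable with gradient ∇_yΨ(y,z), that (y,z) ↦ ∇_yΨ(y,z) is continuous, and that ‖∇_yΨ(y,z)‖ ≤ l for all y ∈ ℝ^m and all z ∈ supp ζ, for some l > 0. Then for every μ > 0 and every y ∈ ℝ^m, the function y ↦ μ · log ∫ e^{Ψ(y,z)/μ} dζ(z) is differentiable at y with gradient G(y,μ) = (∫ e^{Ψ(y,z)/μ} ∇_yΨ(y,z)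 dζ(z)) / (∫ e^{Ψ(y,z)/μ} dζ(z)), and moreover ‖G(y,μ)‖ ≤ l. -/
open MeasureTheory Filter Real Set

/-- the log-sum-exp smoothing `y ↦ μ log ∫ e^{Ψ(y,z)/μ} dζ` is differentiable
with gradient equal to the Gibbs average of `∇_yΨ`, and the gradient is bounded by `l`. -/
theorem logSumExp_smoothing_gradient {m q : ℕ}
    (ζ : Measure (EuclideanSpace ℝ (Fin q))) [IsProbabilityMeasure ζ]
    (hc : IsCompact (msupport ζ))
    (Ψ : EuclideanSpace ℝ (Fin m) → EuclideanSpace ℝ (Fin q) → ℝ)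
    (hΨ : Continuous fun p : EuclideanSpace ℝ (Fin m) × EuclideanSpace ℝ (Fin q) => Ψ p.1 p.2)
    (Ψ' : EuclideanSpace ℝ (Fin m) → EuclideanSpace ℝ (Fin q) → EuclideanSpace ℝ (Fin m))
    (hgrad : ∀ (y : EuclideanSpace ℝ (Fin m)), ∀ z ∈ msupport ζ,
      HasGradientAt (fun y' => Ψ y' z) (Ψ' y z) y)
    (hΨ'cont : Continuous fun p : EuclideanSpace ℝ (Fin m) × EuclideanSpace ℝ (Fin q) =>
      Ψ' p.1 p.2)
    (l : ℝ) (hl : 0 < l)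
    (hbound : ∀ (y : EuclideanSpace ℝ (Fin m)), ∀ z ∈ msupport ζ, ‖Ψ' y z‖ ≤ l)
    (μ : ℝ) (hμ : 0 < μ) (y : EuclideanSpace ℝ (Fin m)) :
    HasGradientAt (fun y' => μ * Real.log (∫ z, Real.exp (Ψ y' z / μ) ∂ζ))
        ((∫ z, Real.exp (Ψ y z / μ) ∂ζ)⁻¹ • ∫ z, Real.exp (Ψ y z / μ) • Ψ' y z ∂ζ) y ∧
      ‖(∫ z, Real.exp (Ψ y z / μ) ∂ζ)⁻¹ • ∫ z, Real.exp (Ψ y z / μ) • Ψ' y z ∂ζ‖ ≤ l := by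
  classical
  set K : Set (EuclideanSpace ℝ (Fin q)) := msupport ζ with hKdef
  -- ζ is concentrated on K
  have hK0 : ζ Kᶜ = 0 := by
    apply measure_null_of_locally_null
    intro x hx
    have hx' : ¬ ∀ U ∈ nhds x, 0 < ζ U := hx
    push_neg at hx'
    obtain ⟨U, hU, hU0⟩ := hx'
    exact ⟨U, mem_nhdsWithin_of_mem_nhds hU, le_antisymm hU0 bot_le⟩
  have haeK : ∀ᵐ z ∂ζ, z ∈ K := by
    rw [MeasureTheory.ae_iff]
    exact hK0
  -- the functions in play
  set L : EuclideanSpace ℝ (Fin m) → (EuclideanSpace ℝ (Fin m) →L[ℝ] ℝ) :=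
    fun v => InnerProductSpace.toDual ℝ (EuclideanSpace ℝ (Fin m)) v with hLdef
  have hLnorm : ∀ v : EuclideanSpace ℝ (Fin m), ‖L v‖ = ‖v‖ := fun v =>
    (InnerProductSpace.toDual ℝ (EuclideanSpace ℝ (Fin m))).norm_map v
  have hLcont : Continuous L := (InnerProductSpace.toDual ℝ (EuclideanSpace ℝ (Fin m))).continuous
  set F : EuclideanSpace ℝ (Fin m) → EuclideanSpace ℝ (Fin q) → ℝ :=
    fun y' z => Real.exp (Ψ y' z / μ) with hFdef
  set F' : EuclideanSpace ℝ (Fin m) → EuclideanSpace ℝ (Fin q) →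
      (EuclideanSpace ℝ (Fin m) →L[ℝ] ℝ) :=
    fun y' z => (Real.exp (Ψ y' z / μ) / μ) • L (Ψ' y' z) with hF'def
  have hΨycont : ∀ y', Continuous fun z => Ψ y' z := fun y' =>
    hΨ.comp (continuous_const.prodMk continuous_id)
  have hΨ'ycont : ∀ y', Continuous fun z => Ψ' y' z := fun y' =>
    hΨ'cont.comp (continuous_const.prodMk continuous_id)
  have hFcont : ∀ y', Continuous (F y') := fun y' =>
    Real.continuous_exp.comp ((hΨycont y').div_const μ)
  have hF'cont : Continuous (F' y) := by
    apply Continuous.smul (f := fun z => Real.exp (Ψ y z / μ) / μ) (g := fun z => L (Ψ' y z))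
    · exact ((hFcont y)).div_const μ
    · exact hLcont.comp (hΨ'ycont y)
  -- uniform bound on the compact set (closedBall y 1) ×ˢ K
  have hS : IsCompact ((Metric.closedBall y 1 : Set (EuclideanSpace ℝ (Fin m))) ×ˢ K) :=
    (isCompact_closedBall y 1).prod hc
  obtain ⟨M, hM⟩ := hS.exists_bound_of_continuousOn hΨ.continuousOn
  have hΨle : ∀ y' ∈ Metric.closedBall y 1, ∀ z ∈ K, |Ψ y' z| ≤ M := by
    intro y' hy' z hz
    simpa [Real.norm_eq_abs] using hM (y', z) ⟨hy', hz⟩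
  have hFle : ∀ y' ∈ Metric.closedBall y 1, ∀ z ∈ K, F y' z ≤ Real.exp (M / μ) := by
    intro y' hy' z hz
    apply Real.exp_le_exp.2
    gcongr
    exact (abs_le.1 (hΨle y' hy' z hz)).2
  have hFge : ∀ z ∈ K, Real.exp (-M / μ) ≤ F y z := by
    intro z hz
    apply Real.exp_le_exp.2
    gcongr
    exact neg_le_of_abs_le (hΨle y (Metric.mem_closedBall_self zero_le_one) z hz)
  have hF'norm : ∀ y' z, ‖F' y' z‖ = Real.exp (Ψ y' z / μ) / μ * ‖Ψ' y' z‖ := by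
    intro y' z
    simp only [hF'def]
    rw [norm_smul (Real.exp (Ψ y' z / μ) / μ) (L (Ψ' y' z)), hLnorm, Real.norm_eq_abs,
      abs_of_pos (div_pos (Real.exp_pos _) hμ)]
  have hF'le : ∀ y' ∈ Metric.closedBall y 1, ∀ z ∈ K,
      ‖F' y' z‖ ≤ Real.exp (M / μ) / μ * l := by
    intro y' hy' z hz
    rw [hF'norm]
    have h1 : Real.exp (Ψ y' z / μ) / μ ≤ Real.exp (M / μ) / μ := by
      gcongr
      exact (abs_le.1 (hΨle y' hy' z hz)).2
    exact mul_le_mul h1 (hbound y' z hz) (norm_nonneg _)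
      (div_nonneg (Real.exp_pos _).le hμ.le)
  -- integrability of F y
  have hFmeas : ∀ y', AEStronglyMeasurable (F y') ζ := fun y' =>
    (hFcont y').aestronglyMeasurable
  have hFint : Integrable (F y) ζ := by
    refine Integrable.mono' (integrable_const (Real.exp (M / μ))) (hFmeas y) ?_
    filter_upwards [haeK] with z hz
    rw [Real.norm_eq_abs, abs_of_pos (Real.exp_pos _)]
    exact hFle y (Metric.mem_closedBall_self zero_le_one) z hz
  -- positivity of the integral
  have hIpos : 0 < ∫ z, F y z ∂ζ := by
    have h1 : ∫ (_ : EuclideanSpace ℝ (Fin q)), Real.exp (-M / μ) ∂ζ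
        = Real.exp (-M / μ) := by simp [measure_univ]
    calc (0 : ℝ) < Real.exp (-M / μ) := Real.exp_pos _
      _ = ∫ (_ : EuclideanSpace ℝ (Fin q)), Real.exp (-M / μ) ∂ζ := h1.symm
      _ ≤ ∫ z, F y z ∂ζ := by
          refine integral_mono_ae (integrable_const _) hFint ?_
          filter_upwards [haeK] with z hz using hFge z hz
  -- differentiation under the integral sign
  have key : HasFDerivAt (fun y' => ∫ z, F y' z ∂ζ) (∫ z, F' y z ∂ζ) y := by
    apply hasFDerivAt_integral_of_dominated_of_fderiv_le
      (bound := fun _ => Real.exp (M / μ) / μ * l) (s := Metric.ball y 1) (Metric.ball_mem_nhds y one_pos)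
    · exact Eventually.of_forall fun y' => hFmeas y'
    · exact hFint
    · exact hF'cont.aestronglyMeasurable
    · filter_upwards [haeK] with z hz
      intro y' hy'
      exact hF'le y' (Metric.ball_subset_closedBall hy') z hz
    · exact integrable_const _
    · filter_upwards [haeK] with z hz
      intro y' _
      have hg : HasFDerivAt (fun y'' => Ψ y'' z) (L (Ψ' y' z)) y' :=
        (hgrad y' z hz).hasFDerivAt
      have hexp : HasDerivAt (fun t => Real.exp (t / μ)) (Real.exp (Ψ y' z / μ) / μ)
          (Ψ y' z) := by
        have h1 : HasDerivAt (fun t : ℝ => t / μ) (1 / μ) (Ψ y' z) :=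
          (hasDerivAt_id _).div_const μ
        have h2 := (Real.hasDerivAt_exp (Ψ y' z / μ)).comp (Ψ y' z) h1
        convert h2 using 1
        exacts [rfl, rfl, rfl, by ring]
      exact hexp.comp_hasFDerivAt y' hg
  -- integrability of the vector integrand
  have hgint : Integrable (fun z => F y z • Ψ' y z) ζ := by
    refine Integrable.mono' (integrable_const (Real.exp (M / μ) * l)) ?_ ?_
    · exact ((hFcont y).smul (hΨ'ycont y)).aestronglyMeasurable
    · filter_upwards [haeK] with z hz
      rw [norm_smul, Real.norm_eq_abs, abs_of_pos (Real.exp_pos _)]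
      exact mul_le_mul (hFle y (Metric.mem_closedBall_self zero_le_one) z hz)
        (hbound y z hz) (norm_nonneg _) (Real.exp_pos _).le
  -- identify the derivative with the gradient
  have hF'int : Integrable (F' y) ζ := by
    refine Integrable.mono' (integrable_const (Real.exp (M / μ) / μ * l))
      hF'cont.aestronglyMeasurable ?_
    filter_upwards [haeK] with z hz
    exact hF'le y (Metric.mem_closedBall_self zero_le_one) z hz
  have hF'eq : ∫ z, F' y z ∂ζ =
      InnerProductSpace.toDual ℝ (EuclideanSpace ℝ (Fin m))
        (μ⁻¹ • ∫ z, F y z • Ψ' y z ∂ζ) := by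
    apply ContinuousLinearMap.ext
    intro v
    rw [ContinuousLinearMap.integral_apply hF'int]
    have hR : InnerProductSpace.toDual ℝ (EuclideanSpace ℝ (Fin m))
        (μ⁻¹ • ∫ z, F y z • Ψ' y z ∂ζ) v
        = μ⁻¹ * ∫ z, F y z * (inner ℝ (Ψ' y z) v : ℝ) ∂ζ := by
      rw [InnerProductSpace.toDual_apply_apply, real_inner_smul_left]
      congr 1
      rw [real_inner_comm]
      have h2 := (ContinuousLinearMap.integral_comp_comm (innerSL ℝ v) hgint).symm
      simp only [innerSL_apply_apply] at h2
      rw [h2]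
      congr 1
      funext z
      rw [real_inner_smul_right, real_inner_comm]
    rw [hR, ← integral_const_mul]
    congr 1
    funext z
    simp only [hF'def, hLdef, ContinuousLinearMap.coe_smul', Pi.smul_apply, smul_eq_mul,
      InnerProductSpace.toDual_apply_apply]
    ring
  -- gradient statement
  set I : ℝ := ∫ z, F y z ∂ζ
  set J : EuclideanSpace ℝ (Fin m) := ∫ z, F y z • Ψ' y z ∂ζ
  have hmain : HasGradientAt (fun y' => μ * Real.log (∫ z, F y' z ∂ζ)) (I⁻¹ • J) y := by
    have hlog := (key.log hIpos.ne')
    have hconst := hlog.const_mul μ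
    have hEq : InnerProductSpace.toDual ℝ (EuclideanSpace ℝ (Fin m)) (I⁻¹ • J)
        = μ • I⁻¹ • (∫ z, F' y z ∂ζ) := by
      rw [hF'eq]
      apply ContinuousLinearMap.ext
      intro v
      simp only [InnerProductSpace.toDual_apply_apply, ContinuousLinearMap.coe_smul',
        Pi.smul_apply, smul_eq_mul, real_inner_smul_left]
      field_simp
    rw [hasGradientAt_iff_hasFDerivAt]
    rw [show InnerProductSpace.toDual ℝ (EuclideanSpace ℝ (Fin m)) (I⁻¹ • J)
        = μ • I⁻¹ • (∫ z, F' y z ∂ζ) from hEq]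
    exact hconst
  constructor
  · exact hmain
  · -- bound on the gradient
    have hJ : ‖J‖ ≤ l * I := by
      calc ‖J‖ ≤ ∫ z, ‖F y z • Ψ' y z‖ ∂ζ := norm_integral_le_integral_norm _
        _ ≤ ∫ z, l * F y z ∂ζ := by
            refine integral_mono_ae hgint.norm (hFint.const_mul l) ?_
            filter_upwards [haeK] with z hz
            rw [norm_smul, Real.norm_eq_abs, abs_of_pos (Real.exp_pos _)]
            rw [mul_comm l (F y z)]
            exact mul_le_mul_of_nonneg_left (hbound y z hz) (Real.exp_pos _).le
        _ = l * I := by rw [integral_const_mul]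
    rw [norm_smul, Real.norm_eq_abs, abs_of_pos (inv_pos.2 hIpos)]
    calc I⁻¹ * ‖J‖ ≤ I⁻¹ * (l * I) :=
          mul_le_mul_of_nonneg_left hJ (inv_pos.2 hIpos).le
      _ = l := by field_simp
end

section
/- Let ζ be a Borel probability measure on ℝ^q with compact support, let Ψ : ℝ^m × ℝ^q → ℝ be continuous, and suppose that for each z ∈ supp ζ the map y ↦ Ψ(y,z) is differentiable with gradient ∇_yΨ(y,z) jointly continuous in (y,z), that ‖∇_yΨ(y,z)‖ ≤ l for all y and all z ∈ supp ζ, and that for each z ∈ supp ζ the map y ↦ ∇_yΨ(y,z) is L-Lipschitz, for constants l, L > 0. Then for every μ > 0 the map G(·,μ) : y ↦ (∫ e^{Ψ(y,z)/μ} ∇_yΨ(y,z) dζ(z)) / (∫ e^{Ψ(y,z)/μ} dζ(z)) is Lipschitz continuous with Lipschitz constant L + 2l²/μ. -/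
open MeasureTheory Filter Real Set

lemma aux_abs_exp_sub_le (s t : ℝ) :
    |Real.exp s - Real.exp t| ≤ (Real.exp s + Real.exp t) * |s - t| / 2 := by
  have key : ∀ t s : ℝ, t ≤ s →
      Real.exp s - Real.exp t ≤ (Real.exp s + Real.exp t) * (s - t) / 2 := by
    intro t s hts
    set F : ℝ → ℝ := fun u =>
      (Real.exp u + Real.exp t) * (u - t) / 2 - (Real.exp u - Real.exp t) with hFdef
    have hF : ∀ u : ℝ, HasDerivAt F
        ((Real.exp u * (u - t) - (Real.exp u - Real.exp t)) / 2) u := by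
      intro u
      have h1 : HasDerivAt (fun u : ℝ => Real.exp u + Real.exp t) (Real.exp u) u :=
        (Real.hasDerivAt_exp u).add_const _
      have h2 : HasDerivAt (fun u : ℝ => u - t) 1 u := (hasDerivAt_id u).sub_const t
      have h3 := ((h1.mul h2).div_const 2).sub ((Real.hasDerivAt_exp u).sub_const (Real.exp t))
      exact h3.congr_deriv (by ring)
    have hmono : MonotoneOn F (Set.Ici t) := by
      apply monotoneOn_of_deriv_nonneg (convex_Ici t)
        (fun u _ => (hF u).continuousAt.continuousWithinAt)
        (fun u _ => (hF u).differentiableAt.differentiableWithinAt)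
      intro u hu
      rw [interior_Ici] at hu
      rw [(hF u).deriv]
      have e1 : Real.exp t = Real.exp u * Real.exp (t - u) := by
        rw [← Real.exp_add]; ring_nf
      have e2 := Real.add_one_le_exp (t - u)
      have e3 := Real.exp_pos u
      nlinarith
    have h0 : F t = 0 := by simp [hFdef]
    have := hmono (mem_Ici.2 le_rfl) (mem_Ici.2 hts) hts
    rw [h0] at this
    simp only [hFdef] at this
    linarith
  rcases le_total t s with h | h
  · rw [abs_of_nonneg (sub_nonneg.2 (Real.exp_le_exp.2 h)), abs_of_nonneg (sub_nonneg.2 h)]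
    exact key t s h
  · rw [abs_of_nonpos (sub_nonpos.2 (Real.exp_le_exp.2 h)), abs_of_nonpos (sub_nonpos.2 h)]
    have := key s t h
    linarith [this]

lemma aux_integrable_of_bound_on {X G : Type*} [MeasurableSpace X] [NormedAddCommGroup G]
    (ν : Measure X) [IsFiniteMeasure ν] {f : X → G} (hf : AEStronglyMeasurable f ν)
    {s : Set X} (hs : ν sᶜ = 0) {C : ℝ} (hC : ∀ x ∈ s, ‖f x‖ ≤ C) : Integrable f ν := by
  refine Integrable.mono' (integrable_const C) hf ?_
  filter_upwards [(mem_ae_iff.mpr hs : ∀ᵐ x ∂ν, x ∈ s)] with x hx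
  exact hC x hx

lemma aux_key_estimate {Z E : Type*} [TopologicalSpace Z] [MeasurableSpace Z]
    [OpensMeasurableSpace Z] [SecondCountableTopology Z]
    [NormedAddCommGroup E] [NormedSpace ℝ E] [CompleteSpace E]
    (ζ : Measure Z) [IsProbabilityMeasure ζ]
    {S : Set Z} (hS : ζ Sᶜ = 0)
    {a b : Z → ℝ} {f g : Z → E}
    (hac : Continuous a) (hbc : Continuous b) (hfc : Continuous f) (hgc : Continuous g)
    {Ca : ℝ} (hCa : ∀ z ∈ S, |a z| ≤ Ca ∧ |b z| ≤ Ca)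
    {lE δ ρ : ℝ} (hl0 : 0 ≤ lE) (hδ0 : 0 ≤ δ) (hρ0 : 0 ≤ ρ)
    (hfb : ∀ z ∈ S, ‖f z‖ ≤ lE) (hgb : ∀ z ∈ S, ‖g z‖ ≤ lE)
    (hab : ∀ z ∈ S, |a z - b z| ≤ δ)
    (hfg : ∀ z ∈ S, ‖f z - g z‖ ≤ ρ) :
    ‖(∫ z, Real.exp (a z) ∂ζ)⁻¹ • (∫ z, Real.exp (a z) • f z ∂ζ)
      - (∫ z, Real.exp (b z) ∂ζ)⁻¹ • (∫ z, Real.exp (b z) • g z ∂ζ)‖ ≤ ρ + 2 * lE * δ := by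
  have haeS : ∀ᵐ z ∂ζ, z ∈ S := mem_ae_iff.mpr hS
  -- integrability over ζ
  have hInt_ea : Integrable (fun z => Real.exp (a z)) ζ := by
    refine aux_integrable_of_bound_on ζ
      (Real.continuous_exp.comp hac).aestronglyMeasurable hS (C := Real.exp Ca) ?_
    intro z hz
    rw [Real.norm_eq_abs, abs_of_pos (Real.exp_pos _)]
    exact Real.exp_le_exp.2 ((abs_le.1 (hCa z hz).1).2)
  have hInt_eb : Integrable (fun z => Real.exp (b z)) ζ := by
    refine aux_integrable_of_bound_on ζ
      (Real.continuous_exp.comp hbc).aestronglyMeasurable hS (C := Real.exp Ca) ?_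
    intro z hz
    rw [Real.norm_eq_abs, abs_of_pos (Real.exp_pos _)]
    exact Real.exp_le_exp.2 ((abs_le.1 (hCa z hz).2).2)
  have hInt_eaf : Integrable (fun z => Real.exp (a z) • f z) ζ := by
    refine aux_integrable_of_bound_on ζ
      (((Real.continuous_exp.comp hac).smul hfc)).aestronglyMeasurable hS
      (C := Real.exp Ca * lE) ?_
    intro z hz
    rw [norm_smul, Real.norm_eq_abs, abs_of_pos (Real.exp_pos _)]
    exact mul_le_mul (Real.exp_le_exp.2 ((abs_le.1 (hCa z hz).1).2)) (hfb z hz)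
      (norm_nonneg _) (Real.exp_pos _).le
  have hInt_eag : Integrable (fun z => Real.exp (a z) • g z) ζ := by
    refine aux_integrable_of_bound_on ζ
      (((Real.continuous_exp.comp hac).smul hgc)).aestronglyMeasurable hS
      (C := Real.exp Ca * lE) ?_
    intro z hz
    rw [norm_smul, Real.norm_eq_abs, abs_of_pos (Real.exp_pos _)]
    exact mul_le_mul (Real.exp_le_exp.2 ((abs_le.1 (hCa z hz).1).2)) (hgb z hz)
      (norm_nonneg _) (Real.exp_pos _).le
  have hInt_ebg : Integrable (fun z => Real.exp (b z) • g z) ζ := by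
    refine aux_integrable_of_bound_on ζ
      (((Real.continuous_exp.comp hbc).smul hgc)).aestronglyMeasurable hS
      (C := Real.exp Ca * lE) ?_
    intro z hz
    rw [norm_smul, Real.norm_eq_abs, abs_of_pos (Real.exp_pos _)]
    exact mul_le_mul (Real.exp_le_exp.2 ((abs_le.1 (hCa z hz).2).2)) (hgb z hz)
      (norm_nonneg _) (Real.exp_pos _).le
  set D₁ := ∫ z, Real.exp (a z) ∂ζ with hD₁def
  set D₂ := ∫ z, Real.exp (b z) ∂ζ with hD₂def
  set Nf := ∫ z, Real.exp (a z) • f z ∂ζ with hNfdef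
  set Ng := ∫ z, Real.exp (a z) • g z ∂ζ with hNgdef
  set N₂ := ∫ z, Real.exp (b z) • g z ∂ζ with hN₂def
  -- positivity of the denominators
  have hD₁pos : 0 < D₁ := by
    have hle : (∫ _z, Real.exp (-Ca) ∂ζ) ≤ D₁ := by
      refine integral_mono_ae (integrable_const _) hInt_ea ?_
      filter_upwards [haeS] with z hz
      exact Real.exp_le_exp.2 ((abs_le.1 (hCa z hz).1).1)
    have : Real.exp (-Ca) ≤ D₁ := by simpa using hle
    exact lt_of_lt_of_le (Real.exp_pos _) this
  have hD₂pos : 0 < D₂ := by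
    have hle : (∫ _z, Real.exp (-Ca) ∂ζ) ≤ D₂ := by
      refine integral_mono_ae (integrable_const _) hInt_eb ?_
      filter_upwards [haeS] with z hz
      exact Real.exp_le_exp.2 ((abs_le.1 (hCa z hz).2).1)
    have : Real.exp (-Ca) ≤ D₂ := by simpa using hle
    exact lt_of_lt_of_le (Real.exp_pos _) this
  -- the product measure
  set P := ζ.prod ζ with hPdef
  have hSSc : P ((S ×ˢ S)ᶜ) = 0 := by
    have hsub : (S ×ˢ S)ᶜ ⊆ (Sᶜ ×ˢ (Set.univ : Set Z)) ∪ ((Set.univ : Set Z) ×ˢ Sᶜ) := by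
      intro p hp
      simp only [mem_compl_iff, Set.mem_prod, Set.mem_union, Set.mem_univ, and_true,
        true_and] at *
      tauto
    refine measure_mono_null hsub (measure_union_null ?_ ?_)
    · rw [hPdef, Measure.prod_prod]; simp [hS]
    · rw [hPdef, Measure.prod_prod]; simp [hS]
  have haeSS : ∀ᵐ p ∂P, p.1 ∈ S ∧ p.2 ∈ S := by
    filter_upwards [(mem_ae_iff.mpr hSSc : ∀ᵐ p ∂P, p ∈ S ×ˢ S)] with p hp
    exact hp
  -- integrability over the product measure
  have hexpb1 : ∀ p : Z × Z, p.1 ∈ S ∧ p.2 ∈ S →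
      Real.exp (a p.1 + b p.2) ≤ Real.exp (Ca + Ca) := by
    intro p hp
    exact Real.exp_le_exp.2 (add_le_add ((abs_le.1 (hCa _ hp.1).1).2) ((abs_le.1 (hCa _ hp.2).2).2))
  have hexpb2 : ∀ p : Z × Z, p.1 ∈ S ∧ p.2 ∈ S →
      Real.exp (a p.2 + b p.1) ≤ Real.exp (Ca + Ca) := by
    intro p hp
    exact Real.exp_le_exp.2 (add_le_add ((abs_le.1 (hCa _ hp.2).1).2) ((abs_le.1 (hCa _ hp.1).2).2))
  have hc1 : Continuous fun p : Z × Z => Real.exp (a p.1 + b p.2) :=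
    Real.continuous_exp.comp ((hac.comp continuous_fst).add (hbc.comp continuous_snd))
  have hc2 : Continuous fun p : Z × Z => Real.exp (a p.2 + b p.1) :=
    Real.continuous_exp.comp ((hac.comp continuous_snd).add (hbc.comp continuous_fst))
  have hIntF₁ : Integrable (fun p : Z × Z => Real.exp (a p.1 + b p.2)) P := by
    refine aux_integrable_of_bound_on P hc1.aestronglyMeasurable hSSc
      (C := Real.exp (Ca + Ca)) ?_
    intro p hp
    rw [Real.norm_eq_abs, abs_of_pos (Real.exp_pos _)]
    exact hexpb1 p hp
  have hIntF₂ : Integrable (fun p : Z × Z => Real.exp (a p.2 + b p.1)) P := by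
    refine aux_integrable_of_bound_on P hc2.aestronglyMeasurable hSSc
      (C := Real.exp (Ca + Ca)) ?_
    intro p hp
    rw [Real.norm_eq_abs, abs_of_pos (Real.exp_pos _)]
    exact hexpb2 p hp
  have hIntV₁ : Integrable (fun p : Z × Z => Real.exp (a p.1 + b p.2) • g p.1) P := by
    refine aux_integrable_of_bound_on P
      (hc1.smul (hgc.comp continuous_fst)).aestronglyMeasurable hSSc
      (C := Real.exp (Ca + Ca) * lE) ?_
    intro p hp
    rw [norm_smul, Real.norm_eq_abs, abs_of_pos (Real.exp_pos _)]
    exact mul_le_mul (hexpb1 p hp) (hgb _ hp.1) (norm_nonneg _) (Real.exp_pos _).le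
  have hIntV₂ : Integrable (fun p : Z × Z => Real.exp (a p.2 + b p.1) • g p.1) P := by
    refine aux_integrable_of_bound_on P
      (hc2.smul (hgc.comp continuous_fst)).aestronglyMeasurable hSSc
      (C := Real.exp (Ca + Ca) * lE) ?_
    intro p hp
    rw [norm_smul, Real.norm_eq_abs, abs_of_pos (Real.exp_pos _)]
    exact mul_le_mul (hexpb2 p hp) (hgb _ hp.1) (norm_nonneg _) (Real.exp_pos _).le
  have hIntf : Integrable
      (fun p : Z × Z => (Real.exp (a p.1 + b p.2) - Real.exp (a p.2 + b p.1)) • g p.1) P := by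
    have : (fun p : Z × Z => (Real.exp (a p.1 + b p.2) - Real.exp (a p.2 + b p.1)) • g p.1)
        = fun p : Z × Z =>
          Real.exp (a p.1 + b p.2) • g p.1 - Real.exp (a p.2 + b p.1) • g p.1 := by
      funext p; rw [sub_smul]
    rw [this]; exact hIntV₁.sub hIntV₂
  have hIntfswap : Integrable
      (fun p : Z × Z => (Real.exp (a p.2 + b p.1) - Real.exp (a p.1 + b p.2)) • g p.2) P := by
    refine aux_integrable_of_bound_on P
      (((hc2.sub hc1)).smul (hgc.comp continuous_snd)).aestronglyMeasurable hSSc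
      (C := (Real.exp (Ca + Ca) + Real.exp (Ca + Ca)) * lE) ?_
    intro p hp
    rw [norm_smul, Real.norm_eq_abs]
    refine mul_le_mul ?_ (hgb _ hp.2) (norm_nonneg _) (by positivity)
    calc |Real.exp (a p.2 + b p.1) - Real.exp (a p.1 + b p.2)|
        ≤ Real.exp (a p.2 + b p.1) + Real.exp (a p.1 + b p.2) := by
          rw [abs_sub_le_iff]
          constructor <;> nlinarith [Real.exp_pos (a p.2 + b p.1), Real.exp_pos (a p.1 + b p.2)]
      _ ≤ Real.exp (Ca + Ca) + Real.exp (Ca + Ca) :=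
          add_le_add (hexpb2 p hp) (hexpb1 p hp)
  have hIntB : Integrable
      (fun p : Z × Z => (Real.exp (a p.1 + b p.2) + Real.exp (a p.2 + b p.1))
        * (δ * (lE + lE))) P :=
    (hIntF₁.add hIntF₂).mul_const _
  -- Fubini computations
  have hV₁ : ∫ p, Real.exp (a p.1 + b p.2) • g p.1 ∂P = D₂ • Ng := by
    rw [hPdef, integral_prod _ (hPdef ▸ hIntV₁)]
    have hin : ∀ z, (∫ w, Real.exp (a z + b w) • g z ∂ζ) = D₂ • (Real.exp (a z) • g z) := by
      intro z
      have : (fun w => Real.exp (a z + b w) • g z)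
          = fun w => Real.exp (b w) • (Real.exp (a z) • g z) := by
        funext w; rw [Real.exp_add, smul_smul, mul_comm]
      rw [this, integral_smul_const]
    simp_rw [hin]
    rw [integral_smul]
  have hV₂ : ∫ p, Real.exp (a p.2 + b p.1) • g p.1 ∂P = D₁ • N₂ := by
    rw [hPdef, integral_prod _ (hPdef ▸ hIntV₂)]
    have hin : ∀ z, (∫ w, Real.exp (a w + b z) • g z ∂ζ) = D₁ • (Real.exp (b z) • g z) := by
      intro z
      have : (fun w => Real.exp (a w + b z) • g z)
          = fun w => Real.exp (a w) • (Real.exp (b z) • g z) := by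
        funext w; rw [Real.exp_add, smul_smul]
      rw [this, integral_smul_const]
    simp_rw [hin]
    rw [integral_smul]
  have hTint : ∫ p, (Real.exp (a p.1 + b p.2) - Real.exp (a p.2 + b p.1)) • g p.1 ∂P
      = D₂ • Ng - D₁ • N₂ := by
    have : (fun p : Z × Z => (Real.exp (a p.1 + b p.2) - Real.exp (a p.2 + b p.1)) • g p.1)
        = fun p : Z × Z =>
          Real.exp (a p.1 + b p.2) • g p.1 - Real.exp (a p.2 + b p.1) • g p.1 := by
      funext p; rw [sub_smul]
    rw [this, integral_sub hIntV₁ hIntV₂, hV₁, hV₂]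
  have hswap : ∫ p, (Real.exp (a p.1 + b p.2) - Real.exp (a p.2 + b p.1)) • g p.1 ∂P
      = ∫ p, (Real.exp (a p.2 + b p.1) - Real.exp (a p.1 + b p.2)) • g p.2 ∂P := by
    rw [hPdef, ← integral_prod_swap
      (fun p : Z × Z => (Real.exp (a p.1 + b p.2) - Real.exp (a p.2 + b p.1)) • g p.1)]
    rfl
  set T := D₂ • Ng - D₁ • N₂ with hTdef
  have h2T : T + T
      = ∫ p, (Real.exp (a p.1 + b p.2) - Real.exp (a p.2 + b p.1)) • (g p.1 - g p.2) ∂P := by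
    rw [← hTint]
    nth_rewrite 2 [hswap]
    rw [← integral_add hIntf hIntfswap]
    congr 1
    funext p
    rw [smul_sub]
    have : (Real.exp (a p.2 + b p.1) - Real.exp (a p.1 + b p.2)) • g p.2
        = -((Real.exp (a p.1 + b p.2) - Real.exp (a p.2 + b p.1)) • g p.2) := by
      rw [← neg_smul]; ring_nf
    rw [this]
    abel
  have hWbound : ‖∫ p, (Real.exp (a p.1 + b p.2) - Real.exp (a p.2 + b p.1))
        • (g p.1 - g p.2) ∂P‖
      ≤ ∫ p, (Real.exp (a p.1 + b p.2) + Real.exp (a p.2 + b p.1)) * (δ * (lE + lE)) ∂P := by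
    refine norm_integral_le_of_norm_le hIntB ?_
    filter_upwards [haeSS] with p hp
    rw [norm_smul, Real.norm_eq_abs]
    have h1 := aux_abs_exp_sub_le (a p.1 + b p.2) (a p.2 + b p.1)
    have h2 : |a p.1 + b p.2 - (a p.2 + b p.1)| ≤ 2 * δ := by
      have e1 := hab _ hp.1
      have e2 := hab _ hp.2
      have : a p.1 + b p.2 - (a p.2 + b p.1) = (a p.1 - b p.1) - (a p.2 - b p.2) := by ring
      rw [this]
      calc |(a p.1 - b p.1) - (a p.2 - b p.2)| ≤ |a p.1 - b p.1| + |a p.2 - b p.2| :=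
        abs_sub _ _
      _ ≤ 2 * δ := by linarith
    have h3 : ‖g p.1 - g p.2‖ ≤ lE + lE :=
      le_trans (norm_sub_le _ _) (add_le_add (hgb _ hp.1) (hgb _ hp.2))
    have hK : |Real.exp (a p.1 + b p.2) - Real.exp (a p.2 + b p.1)|
        ≤ (Real.exp (a p.1 + b p.2) + Real.exp (a p.2 + b p.1)) * δ := by
      calc |Real.exp (a p.1 + b p.2) - Real.exp (a p.2 + b p.1)|
          ≤ (Real.exp (a p.1 + b p.2) + Real.exp (a p.2 + b p.1))
            * |a p.1 + b p.2 - (a p.2 + b p.1)| / 2 := h1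
        _ ≤ (Real.exp (a p.1 + b p.2) + Real.exp (a p.2 + b p.1)) * (2 * δ) / 2 := by
            have hpos : (0:ℝ) ≤ Real.exp (a p.1 + b p.2) + Real.exp (a p.2 + b p.1) := by
              positivity
            have := mul_le_mul_of_nonneg_left h2 hpos
            linarith
        _ = (Real.exp (a p.1 + b p.2) + Real.exp (a p.2 + b p.1)) * δ := by ring
    calc |Real.exp (a p.1 + b p.2) - Real.exp (a p.2 + b p.1)| * ‖g p.1 - g p.2‖
        ≤ ((Real.exp (a p.1 + b p.2) + Real.exp (a p.2 + b p.1)) * δ) * (lE + lE) :=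
          mul_le_mul hK h3 (norm_nonneg _) (by positivity)
      _ = (Real.exp (a p.1 + b p.2) + Real.exp (a p.2 + b p.1)) * (δ * (lE + lE)) := by ring
  have hBint : ∫ p, (Real.exp (a p.1 + b p.2) + Real.exp (a p.2 + b p.1))
      * (δ * (lE + lE)) ∂P = (D₁ * D₂ + D₁ * D₂) * (δ * (lE + lE)) := by
    rw [integral_mul_const]
    congr 1
    rw [integral_add hIntF₁ hIntF₂]
    have e1 : ∫ p, Real.exp (a p.1 + b p.2) ∂P = D₁ * D₂ := by
      simp_rw [Real.exp_add]
      exact integral_prod_mul (fun z => Real.exp (a z)) (fun z => Real.exp (b z))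
    have e2 : ∫ p, Real.exp (a p.2 + b p.1) ∂P = D₁ * D₂ := by
      simp_rw [Real.exp_add]
      rw [show (fun p : Z × Z => Real.exp (a p.2) * Real.exp (b p.1))
        = fun p : Z × Z => Real.exp (b p.1) * Real.exp (a p.2) from funext fun p => mul_comm _ _]
      rw [integral_prod_mul (fun z => Real.exp (b z)) (fun z => Real.exp (a z))]
      exact mul_comm _ _
    rw [e1, e2]
  have hTnorm : ‖T‖ ≤ D₁ * D₂ * (δ * (lE + lE)) := by
    have h2 : ‖T + T‖ ≤ (D₁ * D₂ + D₁ * D₂) * (δ * (lE + lE)) := by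
      rw [h2T]; exact le_trans hWbound (le_of_eq hBint)
    have h3 : ‖T + T‖ = 2 * ‖T‖ := by
      rw [← two_smul ℝ T, norm_smul]; simp
    rw [h3] at h2
    linarith
  -- the first term
  have hfirst : ‖Nf - Ng‖ ≤ D₁ * ρ := by
    rw [hNfdef, hNgdef, ← integral_sub hInt_eaf hInt_eag]
    calc ‖∫ z, (Real.exp (a z) • f z - Real.exp (a z) • g z) ∂ζ‖
        ≤ ∫ z, Real.exp (a z) * ρ ∂ζ := by
          refine norm_integral_le_of_norm_le (hInt_ea.mul_const ρ) ?_
          filter_upwards [haeS] with z hz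
          rw [← smul_sub, norm_smul, Real.norm_eq_abs, abs_of_pos (Real.exp_pos _)]
          exact mul_le_mul_of_nonneg_left (hfg z hz) (Real.exp_pos _).le
      _ = D₁ * ρ := by rw [integral_mul_const]
  -- assembly
  have hsplit : D₁⁻¹ • Nf - D₂⁻¹ • N₂ = D₁⁻¹ • (Nf - Ng) + (D₁ * D₂)⁻¹ • T := by
    have e1 : (D₁ * D₂)⁻¹ * D₂ = D₁⁻¹ := by
      field_simp
    have e2 : (D₁ * D₂)⁻¹ * D₁ = D₂⁻¹ := by
      field_simp
    rw [hTdef, smul_sub, smul_sub, smul_smul, smul_smul, e1, e2]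
    abel
  rw [hsplit]
  calc ‖D₁⁻¹ • (Nf - Ng) + (D₁ * D₂)⁻¹ • T‖
      ≤ ‖D₁⁻¹ • (Nf - Ng)‖ + ‖(D₁ * D₂)⁻¹ • T‖ := norm_add_le _ _
    _ ≤ D₁⁻¹ * (D₁ * ρ) + (D₁ * D₂)⁻¹ * (D₁ * D₂ * (δ * (lE + lE))) := by
        rw [norm_smul, norm_smul, Real.norm_eq_abs, Real.norm_eq_abs,
          abs_of_pos (inv_pos.2 hD₁pos), abs_of_pos (inv_pos.2 (mul_pos hD₁pos hD₂pos))]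
        exact add_le_add (mul_le_mul_of_nonneg_left hfirst (inv_pos.2 hD₁pos).le)
          (mul_le_mul_of_nonneg_left hTnorm (inv_pos.2 (mul_pos hD₁pos hD₂pos)).le)
    _ = ρ + 2 * lE * δ := by
        rw [inv_mul_cancel_left₀ hD₁pos.ne', inv_mul_cancel_left₀ (mul_pos hD₁pos hD₂pos).ne']
        ring


/-- the gradient `G(·, μ)` of the log-sum-exp smoothing is Lipschitz
with constant `L + 2 l² / μ`. -/
theorem logSumExp_gradient_lipschitz {m q : ℕ}
    (ζ : Measure (EuclideanSpace ℝ (Fin q))) [IsProbabilityMeasure ζ]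
    (hc : IsCompact (msupport ζ))
    (Ψ : EuclideanSpace ℝ (Fin m) → EuclideanSpace ℝ (Fin q) → ℝ)
    (hΨ : Continuous fun p : EuclideanSpace ℝ (Fin m) × EuclideanSpace ℝ (Fin q) => Ψ p.1 p.2)
    (Ψ' : EuclideanSpace ℝ (Fin m) → EuclideanSpace ℝ (Fin q) → EuclideanSpace ℝ (Fin m))
    (hgrad : ∀ (y : EuclideanSpace ℝ (Fin m)), ∀ z ∈ msupport ζ,
      HasGradientAt (fun y' => Ψ y' z) (Ψ' y z) y)
    (hΨ'cont : Continuous fun p : EuclideanSpace ℝ (Fin m) × EuclideanSpace ℝ (Fin q) =>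
      Ψ' p.1 p.2)
    (l L : ℝ) (hl : 0 < l) (hL : 0 < L)
    (hbound : ∀ (y : EuclideanSpace ℝ (Fin m)), ∀ z ∈ msupport ζ, ‖Ψ' y z‖ ≤ l)
    (hLip : ∀ z ∈ msupport ζ, ∀ y₁ y₂ : EuclideanSpace ℝ (Fin m),
      ‖Ψ' y₁ z - Ψ' y₂ z‖ ≤ L * ‖y₁ - y₂‖)
    (μ : ℝ) (hμ : 0 < μ) :
    ∀ y₁ y₂ : EuclideanSpace ℝ (Fin m),
      ‖(∫ z, Real.exp (Ψ y₁ z / μ) ∂ζ)⁻¹ • (∫ z, Real.exp (Ψ y₁ z / μ) • Ψ' y₁ z ∂ζ)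
        - (∫ z, Real.exp (Ψ y₂ z / μ) ∂ζ)⁻¹ • (∫ z, Real.exp (Ψ y₂ z / μ) • Ψ' y₂ z ∂ζ)‖
      ≤ (L + 2 * l ^ 2 / μ) * ‖y₁ - y₂‖ := by
  intro y₁ y₂
  -- the complement of the support is null
  have hSc : ζ (msupport ζ)ᶜ = 0 := by
    apply measure_null_of_locally_null
    intro x hx
    simp only [msupport, Set.mem_compl_iff, Set.mem_setOf_eq] at hx
    push_neg at hx
    obtain ⟨U, hU, hU0⟩ := hx
    exact ⟨U, mem_nhdsWithin_of_mem_nhds hU, le_antisymm hU0 zero_le⟩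
  -- continuity of the relevant functions of `z`
  have hΨ1c : Continuous fun z : EuclideanSpace ℝ (Fin q) => Ψ y₁ z / μ :=
    (hΨ.comp (continuous_const.prodMk continuous_id)).div_const μ
  have hΨ2c : Continuous fun z : EuclideanSpace ℝ (Fin q) => Ψ y₂ z / μ :=
    (hΨ.comp (continuous_const.prodMk continuous_id)).div_const μ
  have hf1c : Continuous fun z : EuclideanSpace ℝ (Fin q) => Ψ' y₁ z :=
    hΨ'cont.comp (continuous_const.prodMk continuous_id)
  have hf2c : Continuous fun z : EuclideanSpace ℝ (Fin q) => Ψ' y₂ z :=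
    hΨ'cont.comp (continuous_const.prodMk continuous_id)
  -- bounds on the compact support
  obtain ⟨C₁, hC₁⟩ := hc.exists_bound_of_continuousOn hΨ1c.continuousOn
  obtain ⟨C₂, hC₂⟩ := hc.exists_bound_of_continuousOn hΨ2c.continuousOn
  -- the mean value estimate
  have hΨlip : ∀ z ∈ msupport ζ,
      |Ψ y₁ z / μ - Ψ y₂ z / μ| ≤ l / μ * ‖y₁ - y₂‖ := by
    intro z hz
    have hmv : ‖Ψ y₁ z - Ψ y₂ z‖ ≤ l * ‖y₁ - y₂‖ := by
      have hb : ∀ y ∈ (Set.univ : Set (EuclideanSpace ℝ (Fin m))),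
          ‖(fun y => (InnerProductSpace.toDual ℝ (EuclideanSpace ℝ (Fin m))) (Ψ' y z)) y‖
            ≤ l := by
        intro y _
        calc ‖(InnerProductSpace.toDual ℝ (EuclideanSpace ℝ (Fin m))) (Ψ' y z)‖
            = ‖Ψ' y z‖ := LinearIsometryEquiv.norm_map _ _
          _ ≤ l := hbound y z hz
      exact Convex.norm_image_sub_le_of_norm_hasFDerivWithin_le
        (fun y _ => ((hgrad y z hz).hasFDerivAt).hasFDerivWithinAt) hb convex_univ
        (Set.mem_univ y₂) (Set.mem_univ y₁)
    rw [div_sub_div_same, abs_div, abs_of_pos hμ]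
    rw [Real.norm_eq_abs] at hmv
    calc |Ψ y₁ z - Ψ y₂ z| / μ ≤ (l * ‖y₁ - y₂‖) / μ := by gcongr
      _ = l / μ * ‖y₁ - y₂‖ := by ring
  have key := aux_key_estimate ζ hSc hΨ1c hΨ2c hf1c hf2c
    (Ca := max C₁ C₂)
    (fun z hz => ⟨le_trans (le_of_eq (Real.norm_eq_abs _).symm)
        (le_trans (hC₁ z hz) (le_max_left _ _)),
      le_trans (le_of_eq (Real.norm_eq_abs _).symm)
        (le_trans (hC₂ z hz) (le_max_right _ _))⟩)
    (lE := l) (δ := l / μ * ‖y₁ - y₂‖) (ρ := L * ‖y₁ - y₂‖)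
    hl.le (by positivity) (by positivity)
    (fun z hz => hbound y₁ z hz) (fun z hz => hbound y₂ z hz)
    hΨlip
    (fun z hz => hLip z hz y₁ y₂)
  refine le_trans key (le_of_eq ?_)
  ring
end

section
/- Let t ≥ 1 be an integer and r : {1,…,t} → ℝ. For all real μ₁, μ₂ with 1 ≥ μ₁ > μ₂ > 0, one has | μ₁ · log( (1/t) Σ_{j=1}^t e^{r_j/μ₁} ) − μ₂ · log( (1/t) Σ_{j=1}^t e^{r_j/μ₂} ) | ≤ 2·log(t)·(μ₁ − μ₂). -/
open Real Finset

/-- For positive `b` and `p ≥ 1`, `∑ b j ^ p ≤ (∑ b j) ^ p`. -/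
lemma my_sum_rpow_le_rpow_sum {ι : Type*} (s : Finset ι) (hs : s.Nonempty)
    (b : ι → ℝ) (hb : ∀ i ∈ s, 0 < b i) {p : ℝ} (hp : 1 ≤ p) :
    ∑ i ∈ s, b i ^ p ≤ (∑ i ∈ s, b i) ^ p := by
  set S := ∑ i ∈ s, b i with hS
  have hSpos : 0 < S := Finset.sum_pos hb hs
  have h1 : ∀ i ∈ s, b i ^ p ≤ b i * S ^ (p - 1) := by
    intro i hi
    have hbi := hb i hi
    have hble : b i ≤ S := Finset.single_le_sum (fun j hj => (hb j hj).le) hi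
    have hpe : (1:ℝ) + (p - 1) = p := by ring
    have : b i ^ p = b i * b i ^ (p - 1) := by
      conv_lhs => rw [← hpe]
      rw [Real.rpow_add hbi, Real.rpow_one]
    rw [this]
    have := Real.rpow_le_rpow hbi.le hble (by linarith : (0:ℝ) ≤ p - 1)
    nlinarith [Real.rpow_nonneg hbi.le (p-1)]
  calc ∑ i ∈ s, b i ^ p ≤ ∑ i ∈ s, b i * S ^ (p - 1) := Finset.sum_le_sum h1
    _ = S * S ^ (p - 1) := by rw [← Finset.sum_mul]
    _ = S ^ (1 + (p - 1)) := by rw [Real.rpow_add hSpos, Real.rpow_one]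
    _ = S ^ p := by ring_nf

/-- for a finite log-sum-exp average with `1 ≥ μ₁ > μ₂ > 0`,
`|μ₁ log((1/t)Σe^{r_j/μ₁}) − μ₂ log((1/t)Σe^{r_j/μ₂})| ≤ 2 log(t)(μ₁ − μ₂)`. -/
theorem finite_logSumExp_mu_diff_bound (t : ℕ) (ht : 1 ≤ t) (r : Fin t → ℝ)
    (μ₁ μ₂ : ℝ) (hμ₁ : μ₁ ≤ 1) (h12 : μ₂ < μ₁) (h2 : 0 < μ₂) :
    |μ₁ * Real.log ((1 / (t : ℝ)) * ∑ j : Fin t, Real.exp (r j / μ₁))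
      - μ₂ * Real.log ((1 / (t : ℝ)) * ∑ j : Fin t, Real.exp (r j / μ₂))|
      ≤ 2 * Real.log t * (μ₁ - μ₂) := by
  have h1 : 0 < μ₁ := h2.trans h12
  have htpos : (0:ℝ) < t := by exact_mod_cast ht
  have hne : (Finset.univ : Finset (Fin t)).Nonempty := by
    rw [Finset.univ_nonempty_iff]
    exact Fin.pos_iff_nonempty.mp ht
  set p : ℝ := μ₁ / μ₂ with hp_def
  have hp1 : 1 ≤ p := (one_le_div h2).mpr h12.le
  set S₁ := ∑ j : Fin t, Real.exp (r j / μ₁) with hS₁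
  set S₂ := ∑ j : Fin t, Real.exp (r j / μ₂) with hS₂
  have hS₁pos : 0 < S₁ := Finset.sum_pos (fun i _ => Real.exp_pos _) hne
  have hS₂pos : 0 < S₂ := Finset.sum_pos (fun i _ => Real.exp_pos _) hne
  -- key: exp(r j / μ₁) ^ p = exp(r j / μ₂)
  have hkey : ∀ j : Fin t, Real.exp (r j / μ₁) ^ p = Real.exp (r j / μ₂) := by
    intro j
    rw [← Real.exp_mul]
    congr 1
    rw [hp_def]
    field_simp
  have hlogt0 : 0 ≤ Real.log t := Real.log_nonneg (by exact_mod_cast ht)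
  -- log((1/t) * S) = log S - log t
  have hlog : ∀ S : ℝ, 0 < S →
      Real.log ((1 / (t:ℝ)) * S) = Real.log S - Real.log t := by
    intro S hS
    rw [Real.log_mul (by positivity) hS.ne', one_div, Real.log_inv]
    ring
  -- Claim A : μ₁ * log((1/t)*S₁) ≤ μ₂ * log((1/t)*S₂)
  have hA : μ₁ * Real.log ((1/(t:ℝ)) * S₁) ≤ μ₂ * Real.log ((1/(t:ℝ)) * S₂) := by
    have hpm := Real.rpow_arith_mean_le_arith_mean_rpow (Finset.univ : Finset (Fin t))
      (fun _ => 1/(t:ℝ)) (fun j => Real.exp (r j / μ₁))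
      (fun i _ => by positivity)
      (by simp [Finset.card_univ]; field_simp)
      (fun i _ => (Real.exp_pos _).le) hp1
    simp only [hkey, ← Finset.mul_sum] at hpm
    -- hpm : ((1/t) * S₁) ^ p ≤ (1/t) * S₂
    have hlhs : (0:ℝ) < (1/(t:ℝ)) * S₁ := by positivity
    have := Real.log_le_log (by positivity) hpm
    rw [Real.log_rpow hlhs] at this
    have h' : μ₂ * (p * Real.log ((1/(t:ℝ)) * S₁)) ≤ μ₂ * Real.log ((1/(t:ℝ)) * S₂) :=
      mul_le_mul_of_nonneg_left this h2.le
    have he : μ₂ * (p * Real.log ((1/(t:ℝ)) * S₁)) = μ₁ * Real.log ((1/(t:ℝ)) * S₁) := by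
      rw [← mul_assoc, hp_def]
      field_simp
    linarith [h']
  -- Claim B : μ₂ * log((1/t)*S₂) - μ₁ * log((1/t)*S₁) ≤ log t * (μ₁ - μ₂)
  have hB : μ₂ * Real.log ((1/(t:ℝ)) * S₂) - μ₁ * Real.log ((1/(t:ℝ)) * S₁)
      ≤ Real.log t * (μ₁ - μ₂) := by
    have hsum := my_sum_rpow_le_rpow_sum (Finset.univ : Finset (Fin t)) hne
      (fun j => Real.exp (r j / μ₁)) (fun i _ => Real.exp_pos _) hp1
    simp only [hkey] at hsum
    -- hsum : S₂ ≤ S₁ ^ p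
    have := Real.log_le_log hS₂pos hsum
    rw [Real.log_rpow hS₁pos] at this
    have h' : μ₂ * Real.log S₂ ≤ μ₂ * (p * Real.log S₁) :=
      mul_le_mul_of_nonneg_left this h2.le
    have he : μ₂ * (p * Real.log S₁) = μ₁ * Real.log S₁ := by
      rw [← mul_assoc, hp_def]
      field_simp
    rw [hlog S₁ hS₁pos, hlog S₂ hS₂pos]
    nlinarith [h']
  rw [abs_sub_le_iff]
  constructor
  · nlinarith
  · nlinarith
end

section
/- Let t ≥ 1 be an integer and y : {1,…,t} → ℝ, and define b̃(y, μ) = μ · log( Σ_{i=1}^t e^{y_i/μ} ) for μ > 0. For all real μ₁ ≥ μ₂ > 0, one has | b̃(y, μ₁) − b̃(y, μ₂) | ≤ log(t)·(μ₁ − μ₂). -/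
open Real Finset

/-- for the finite log-sum-exp function `b̃(y, μ) = μ log Σᵢ e^{yᵢ/μ}`,
for `μ₁ ≥ μ₂ > 0` one has `|b̃(y, μ₁) − b̃(y, μ₂)| ≤ log(t) (μ₁ − μ₂)`. -/
theorem finite_logSumExp_mu_lipschitz (t : ℕ) (ht : 1 ≤ t) (y : Fin t → ℝ)
    (μ₁ μ₂ : ℝ) (h12 : μ₂ ≤ μ₁) (h2 : 0 < μ₂) :
    |μ₁ * Real.log (∑ i : Fin t, Real.exp (y i / μ₁))
      - μ₂ * Real.log (∑ i : Fin t, Real.exp (y i / μ₂))|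
      ≤ Real.log t * (μ₁ - μ₂) := by
  have h1 : 0 < μ₁ := lt_of_lt_of_le h2 h12
  set p : ℝ := μ₁ / μ₂ with hp_def
  have hp : 1 ≤ p := (one_le_div h2).mpr h12
  have hp0 : 0 < p := lt_of_lt_of_le one_pos hp
  set a : Fin t → ℝ := fun i => Real.exp (y i / μ₁) with ha_def
  have hapos : ∀ i, 0 < a i := fun i => Real.exp_pos _
  have hkey : ∀ i, Real.exp (y i / μ₂) = a i ^ p := by
    intro i
    rw [ha_def, ← Real.exp_mul]
    congr 1
    rw [hp_def]
    field_simp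
  have hS1pos : 0 < ∑ i : Fin t, a i := by
    have : Nonempty (Fin t) := Fin.pos_iff_nonempty.mp ht
    exact Finset.sum_pos (fun i _ => hapos i) Finset.univ_nonempty
  set S₁ : ℝ := ∑ i : Fin t, a i with hS1_def
  set S₂ : ℝ := ∑ i : Fin t, a i ^ p with hS2_def
  have hS2pos : 0 < S₂ := by
    have : Nonempty (Fin t) := Fin.pos_iff_nonempty.mp ht
    exact Finset.sum_pos (fun i _ => Real.rpow_pos_of_pos (hapos i) p) Finset.univ_nonempty
  have hrw : (∑ i : Fin t, Real.exp (y i / μ₂)) = S₂ := by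
    simp only [hS2_def, hkey]
  -- monotonicity: Σ a^p ≤ (Σ a)^p
  have hmono : S₂ ≤ S₁ ^ p := by
    have hstep : ∀ i : Fin t, a i ^ p ≤ a i * S₁ ^ (p - 1) := by
      intro i
      have hai : a i ≤ S₁ := Finset.single_le_sum (fun j _ => (hapos j).le) (Finset.mem_univ i)
      calc a i ^ p = a i ^ (1 : ℝ) * a i ^ (p - 1) := by
            rw [← Real.rpow_add (hapos i)]; ring_nf
        _ ≤ a i * S₁ ^ (p - 1) := by
            rw [Real.rpow_one]
            exact mul_le_mul_of_nonneg_left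
              (Real.rpow_le_rpow (hapos i).le hai (by linarith)) (hapos i).le
    calc S₂ ≤ ∑ i : Fin t, a i * S₁ ^ (p - 1) := Finset.sum_le_sum fun i _ => hstep i
      _ = S₁ * S₁ ^ (p - 1) := by rw [← Finset.sum_mul]
      _ = S₁ ^ (1 : ℝ) * S₁ ^ (p - 1) := by rw [Real.rpow_one]
      _ = S₁ ^ p := by rw [← Real.rpow_add hS1pos]; ring_nf
  -- Jensen: (Σ a)^p ≤ t^(p-1) Σ a^p
  have hjensen : S₁ ^ p ≤ (t : ℝ) ^ (p - 1) * S₂ := by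
    have := Real.rpow_sum_le_const_mul_sum_rpow_of_nonneg (s := (Finset.univ : Finset (Fin t)))
      (f := a) hp (fun i _ => (hapos i).le)
    simpa using this
  have hlogt : 0 ≤ Real.log t := Real.log_nonneg (by exact_mod_cast ht)
  -- lower bound: μ₂ log S₂ ≤ μ₁ log S₁
  have hlow : μ₂ * Real.log S₂ ≤ μ₁ * Real.log S₁ := by
    have := Real.log_le_log hS2pos hmono
    rw [Real.log_rpow hS1pos] at this
    calc μ₂ * Real.log S₂ ≤ μ₂ * (p * Real.log S₁) := by nlinarith
      _ = μ₁ * Real.log S₁ := by rw [hp_def]; field_simp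
  -- upper bound
  have hupp : μ₁ * Real.log S₁ ≤ μ₂ * Real.log S₂ + Real.log t * (μ₁ - μ₂) := by
    have h := Real.log_le_log (Real.rpow_pos_of_pos hS1pos p) hjensen
    rw [Real.log_rpow hS1pos, Real.log_mul (by positivity) (ne_of_gt hS2pos),
      Real.log_rpow (by exact_mod_cast lt_of_lt_of_le one_pos (by exact_mod_cast ht) : (0:ℝ) < t)] at h
    have h2' := mul_le_mul_of_nonneg_left h h2.le
    have hpe : μ₂ * p = μ₁ := by rw [hp_def]; field_simp
    have e1 : μ₂ * (p * Real.log S₁) = μ₁ * Real.log S₁ := by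
      linear_combination Real.log S₁ * hpe
    have e2 : μ₂ * ((p - 1) * Real.log ↑t + Real.log S₂)
        = (μ₁ - μ₂) * Real.log ↑t + μ₂ * Real.log S₂ := by
      linear_combination Real.log ↑t * hpe
    linarith [h2', e1, e2]
  rw [hrw, abs_le]
  constructor <;> nlinarith
end

section
/- Let ζ be a Borel probability measure on ℝ^q with compact support, let Ψ : ℝ^m × ℝ^q → ℝ be continuous, and let K ⊆ ℝ^m be compact. Define Φ̃(y, μ) = μ · log ∫ e^{Ψ(y,z)/μ} dζ(z). Then there exists a constant C₀ > 0 such that for every y ∈ K, every μ₁ with 0 < μ₁ ≤ 1, and every μ₂ with μ₁/2 ≤ μ₂ ≤ μ₁, one has | Φ̃(y, μ₁) − Φ̃(y, μ₂) | ≤ (C₀/μ₂)·(μ₁ − μ₂). -/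
open MeasureTheory Filter Real Set

theorem msupport_compl_null {E : Type*} [TopologicalSpace E] [MeasurableSpace E]
    [SecondCountableTopology E] (ζ : Measure E) : ζ (msupport ζ)ᶜ = 0 := by
  apply measure_null_of_locally_null
  intro x hx
  simp only [msupport, mem_compl_iff, mem_setOf_eq, not_forall] at hx
  obtain ⟨U, hU, hU0⟩ := hx
  exact ⟨U, nhdsWithin_le_nhds hU, le_antisymm (not_lt.mp hU0) bot_le⟩

/-- uniform control of the variation in `μ` of the log-sum-exp smoothing
`Φ̃(y, μ) = μ log ∫ e^{Ψ(y,z)/μ} dζ(z)` over a compact set `K`: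
there is `C₀ > 0` with `|Φ̃(y, μ₁) − Φ̃(y, μ₂)| ≤ (C₀/μ₂)(μ₁ − μ₂)` whenever
`y ∈ K`, `0 < μ₁ ≤ 1` and `μ₁/2 ≤ μ₂ ≤ μ₁`. -/
theorem logSumExp_mu_variation_bound {m q : ℕ}
    (ζ : Measure (EuclideanSpace ℝ (Fin q))) [IsProbabilityMeasure ζ]
    (hc : IsCompact (msupport ζ))
    (Ψ : EuclideanSpace ℝ (Fin m) → EuclideanSpace ℝ (Fin q) → ℝ)
    (hΨ : Continuous fun p : EuclideanSpace ℝ (Fin m) × EuclideanSpace ℝ (Fin q) => Ψ p.1 p.2)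
    (K : Set (EuclideanSpace ℝ (Fin m))) (hK : IsCompact K) :
    ∃ C₀ : ℝ, 0 < C₀ ∧ ∀ y ∈ K, ∀ μ₁ : ℝ, 0 < μ₁ → μ₁ ≤ 1 →
      ∀ μ₂ : ℝ, μ₁ / 2 ≤ μ₂ → μ₂ ≤ μ₁ →
        |μ₁ * Real.log (∫ z, Real.exp (Ψ y z / μ₁) ∂ζ)
          - μ₂ * Real.log (∫ z, Real.exp (Ψ y z / μ₂) ∂ζ)|
        ≤ (C₀ / μ₂) * (μ₁ - μ₂) := by
  -- a.e. support membership
  have hae : ∀ᵐ z ∂ζ, z ∈ msupport ζ := by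
    rw [ae_iff]
    exact msupport_compl_null ζ
  -- bound on Ψ
  obtain ⟨M, hM⟩ := (hK.prod hc).exists_bound_of_continuousOn hΨ.continuousOn
  set M' : ℝ := max M 1 with hM'def
  have hM'pos : (0:ℝ) < M' := lt_of_lt_of_le one_pos (le_max_right _ _)
  have hbound : ∀ y ∈ K, ∀ z ∈ msupport ζ, |Ψ y z| ≤ M' := by
    intro y hy z hz
    have := hM (y, z) ⟨hy, hz⟩
    rw [Real.norm_eq_abs] at this
    exact this.trans (le_max_left _ _)
  refine ⟨2 * M', by positivity, fun y hy μ₁ hμ₁ hμ₁1 μ₂ hμ₂l hμ₂u => ?_⟩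
  have hμ₂ : 0 < μ₂ := lt_of_lt_of_le (by linarith) hμ₂l
  -- generic facts for any μ > 0
  have key : ∀ μ : ℝ, 0 < μ →
      Integrable (fun z => Real.exp (Ψ y z / μ)) ζ ∧
      Real.exp (-(M'/μ)) ≤ (∫ z, Real.exp (Ψ y z / μ) ∂ζ) ∧
      (∫ z, Real.exp (Ψ y z / μ) ∂ζ) ≤ Real.exp (M'/μ) := by
    intro μ hμ
    have hcont : Continuous (fun z => Real.exp (Ψ y z / μ)) := by
      exact Real.continuous_exp.comp ((hΨ.comp (continuous_const.prodMk continuous_id)).div_const μ)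
    have haeb : ∀ᵐ z ∂ζ, Real.exp (-(M'/μ)) ≤ Real.exp (Ψ y z / μ) ∧
        Real.exp (Ψ y z / μ) ≤ Real.exp (M'/μ) := by
      filter_upwards [hae] with z hz
      have h := hbound y hy z hz
      have h1 : -(M') ≤ Ψ y z := (abs_le.mp h).1
      have h2 : Ψ y z ≤ M' := (abs_le.mp h).2
      constructor
      · apply Real.exp_le_exp.mpr
        rw [← neg_div]
        exact div_le_div_of_nonneg_right h1 hμ.le
      · exact Real.exp_le_exp.mpr (div_le_div_of_nonneg_right h2 hμ.le)
    have hInt : Integrable (fun z => Real.exp (Ψ y z / μ)) ζ := by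
      apply Integrable.mono' (integrable_const (Real.exp (M'/μ))) hcont.aestronglyMeasurable
      filter_upwards [haeb] with z hz
      rw [Real.norm_eq_abs, abs_of_pos (Real.exp_pos _)]
      exact hz.2
    refine ⟨hInt, ?_, ?_⟩
    · calc Real.exp (-(M'/μ)) = ∫ _, Real.exp (-(M'/μ)) ∂ζ := by simp
        _ ≤ ∫ z, Real.exp (Ψ y z / μ) ∂ζ := by
            apply integral_mono_ae (integrable_const _) hInt
            filter_upwards [haeb] with z hz using hz.1
    · calc (∫ z, Real.exp (Ψ y z / μ) ∂ζ) ≤ ∫ _, Real.exp (M'/μ) ∂ζ := by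
            apply integral_mono_ae hInt (integrable_const _)
            filter_upwards [haeb] with z hz using hz.2
        _ = Real.exp (M'/μ) := by simp
  obtain ⟨hInt₁, hlo₁, hhi₁⟩ := key μ₁ hμ₁
  obtain ⟨hInt₂, hlo₂, hhi₂⟩ := key μ₂ hμ₂
  set I₁ := ∫ z, Real.exp (Ψ y z / μ₁) ∂ζ with hI₁
  set I₂ := ∫ z, Real.exp (Ψ y z / μ₂) ∂ζ with hI₂
  have hI₁pos : 0 < I₁ := lt_of_lt_of_le (Real.exp_pos _) hlo₁
  have hI₂pos : 0 < I₂ := lt_of_lt_of_le (Real.exp_pos _) hlo₂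
  have hlog₁ : |Real.log I₁| ≤ M'/μ₁ := by
    rw [abs_le]
    constructor
    · calc -(M'/μ₁) = Real.log (Real.exp (-(M'/μ₁))) := (Real.log_exp _).symm
        _ ≤ Real.log I₁ := Real.log_le_log (Real.exp_pos _) hlo₁
    · calc Real.log I₁ ≤ Real.log (Real.exp (M'/μ₁)) := Real.log_le_log hI₁pos hhi₁
        _ = M'/μ₁ := Real.log_exp _
  have hlog₂ : |Real.log I₂| ≤ M'/μ₂ := by
    rw [abs_le]
    constructor
    · calc -(M'/μ₂) = Real.log (Real.exp (-(M'/μ₂))) := (Real.log_exp _).symm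
        _ ≤ Real.log I₂ := Real.log_le_log (Real.exp_pos _) hlo₂
    · calc Real.log I₂ ≤ Real.log (Real.exp (M'/μ₂)) := Real.log_le_log hI₂pos hhi₂
        _ = M'/μ₂ := Real.log_exp _
  -- comparison of I₁, I₂
  set δ : ℝ := M' * (μ₁ - μ₂) / (μ₁ * μ₂) with hδdef
  have hδnn : 0 ≤ δ := by
    apply div_nonneg
    · nlinarith
    · positivity
  have hcomp : ∀ᵐ z ∂ζ, Real.exp (Ψ y z / μ₂) ≤ Real.exp (Ψ y z / μ₁) * Real.exp δ ∧
      Real.exp (Ψ y z / μ₁) ≤ Real.exp (Ψ y z / μ₂) * Real.exp δ := by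
    filter_upwards [hae] with z hz
    have h := hbound y hy z hz
    have hdiff : |Ψ y z / μ₂ - Ψ y z / μ₁| ≤ δ := by
      rw [div_sub_div _ _ (ne_of_gt hμ₂) (ne_of_gt hμ₁)]
      rw [abs_div, abs_of_pos (by positivity : (0:ℝ) < μ₂ * μ₁)]
      rw [hδdef]
      rw [div_le_div_iff₀ (by positivity) (by positivity)]
      have : |Ψ y z * μ₁ - μ₂ * Ψ y z| = |Ψ y z| * (μ₁ - μ₂) := by
        rw [show Ψ y z * μ₁ - μ₂ * Ψ y z = Ψ y z * (μ₁ - μ₂) by ring]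
        rw [abs_mul, abs_of_nonneg (by linarith : (0:ℝ) ≤ μ₁ - μ₂)]
      rw [this]
      nlinarith [mul_nonneg (mul_nonneg (sub_nonneg.mpr h) (by linarith : (0:ℝ) ≤ μ₁ - μ₂)) (le_of_lt (mul_pos hμ₁ hμ₂))]
    constructor
    · rw [← Real.exp_add]
      apply Real.exp_le_exp.mpr
      have := (abs_le.mp hdiff).2
      linarith
    · rw [← Real.exp_add]
      apply Real.exp_le_exp.mpr
      have := (abs_le.mp hdiff).1
      linarith
  have hIcomp₂ : I₂ ≤ I₁ * Real.exp δ := by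
    calc I₂ ≤ ∫ z, Real.exp (Ψ y z / μ₁) * Real.exp δ ∂ζ := by
          apply integral_mono_ae hInt₂ (hInt₁.mul_const _)
          filter_upwards [hcomp] with z hz using hz.1
      _ = I₁ * Real.exp δ := by rw [integral_mul_const]
  have hIcomp₁ : I₁ ≤ I₂ * Real.exp δ := by
    calc I₁ ≤ ∫ z, Real.exp (Ψ y z / μ₂) * Real.exp δ ∂ζ := by
          apply integral_mono_ae hInt₁ (hInt₂.mul_const _)
          filter_upwards [hcomp] with z hz using hz.2
      _ = I₂ * Real.exp δ := by rw [integral_mul_const]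
  have hlogdiff : |Real.log I₂ - Real.log I₁| ≤ δ := by
    rw [abs_le]
    constructor
    · have : Real.log I₁ ≤ Real.log I₂ + δ := by
        calc Real.log I₁ ≤ Real.log (I₂ * Real.exp δ) := Real.log_le_log hI₁pos hIcomp₁
          _ = Real.log I₂ + δ := by rw [Real.log_mul (ne_of_gt hI₂pos) (Real.exp_ne_zero _), Real.log_exp]
      linarith
    · have : Real.log I₂ ≤ Real.log I₁ + δ := by
        calc Real.log I₂ ≤ Real.log (I₁ * Real.exp δ) := Real.log_le_log hI₂pos hIcomp₂
          _ = Real.log I₁ + δ := by rw [Real.log_mul (ne_of_gt hI₁pos) (Real.exp_ne_zero _), Real.log_exp]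
      linarith
  -- final arithmetic
  have hsplit : μ₁ * Real.log I₁ - μ₂ * Real.log I₂
      = (μ₁ - μ₂) * Real.log I₂ + μ₁ * (Real.log I₁ - Real.log I₂) := by ring
  rw [hsplit]
  calc |(μ₁ - μ₂) * Real.log I₂ + μ₁ * (Real.log I₁ - Real.log I₂)|
      ≤ |(μ₁ - μ₂) * Real.log I₂| + |μ₁ * (Real.log I₁ - Real.log I₂)| := abs_add_le _ _
    _ ≤ (μ₁ - μ₂) * (M'/μ₂) + μ₁ * δ := by
        apply add_le_add
        · rw [abs_mul, abs_of_nonneg (by linarith : (0:ℝ) ≤ μ₁ - μ₂)]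
          exact mul_le_mul_of_nonneg_left hlog₂ (by linarith)
        · rw [abs_mul, abs_of_pos hμ₁, abs_sub_comm]
          exact mul_le_mul_of_nonneg_left hlogdiff (le_of_lt hμ₁)
    _ = (2 * M' / μ₂) * (μ₁ - μ₂) := by
        rw [hδdef]
        field_simp
        ring
end

section
/- Let Z ⊆ ℝ^q be nonempty and compact, let Ψ : ℝ^m × ℝ^q → ℝ be continuous, suppose that for each z ∈ Z the map y ↦ Ψ(y,z) is differentiable with gradient ∇_yΨ(y,z), that (y,z) ↦ ∇_yΨ(y,z) is continuous, and that ‖∇_yΨ(y,z)‖ ≤ l for all y ∈ ℝ^m, z ∈ Z. Define Φ(y) = max_{z ∈ Z} Ψ(y,z). Then for every y ∈ ℝ^m and every direction d ∈ ℝ^m, the Clarke generalized directional derivative limsup_{y' → y, t → 0⁺} (Φ(y' + t·d) − Φ(y'))/t is at most sup{ ⟨∇_yΨ(y, z̄), d⟩ : z̄ ∈ Z, Ψ(y, z̄) = Φ(y) }, where the limsup is taken along the product of the neighborhood filter of y and the right-neighborhood filter of 0. -/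
open Filter Real Set RealInnerProductSpace

/-- the Clarke generalized directional derivative of
`Φ(y) = max_{z ∈ Z} Ψ(y, z)` at `y` in direction `d` is bounded above by the largest
value of `⟪∇_yΨ(y, z̄), d⟫` over maximizers `z̄` of `Ψ(y, ·)` on `Z`. -/
theorem clarke_directional_derivative_max_bound {m q : ℕ}
    (Z : Set (EuclideanSpace ℝ (Fin q))) (hZc : IsCompact Z) (hZne : Z.Nonempty)
    (Ψ : EuclideanSpace ℝ (Fin m) → EuclideanSpace ℝ (Fin q) → ℝ)
    (hΨ : Continuous fun p : EuclideanSpace ℝ (Fin m) × EuclideanSpace ℝ (Fin q) => Ψ p.1 p.2)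
    (Ψ' : EuclideanSpace ℝ (Fin m) → EuclideanSpace ℝ (Fin q) → EuclideanSpace ℝ (Fin m))
    (hgrad : ∀ (y : EuclideanSpace ℝ (Fin m)), ∀ z ∈ Z,
      HasGradientAt (fun y' => Ψ y' z) (Ψ' y z) y)
    (hΨ'cont : Continuous fun p : EuclideanSpace ℝ (Fin m) × EuclideanSpace ℝ (Fin q) =>
      Ψ' p.1 p.2)
    (l : ℝ)
    (hbound : ∀ (y : EuclideanSpace ℝ (Fin m)), ∀ z ∈ Z, ‖Ψ' y z‖ ≤ l)
    (y d : EuclideanSpace ℝ (Fin m)) :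
    Filter.limsup
        (fun p : EuclideanSpace ℝ (Fin m) × ℝ =>
          (sSup ((fun z => Ψ (p.1 + p.2 • d) z) '' Z) - sSup ((fun z => Ψ p.1 z) '' Z)) / p.2)
        ((nhds y) ×ˢ (nhdsWithin 0 (Set.Ioi (0 : ℝ))))
      ≤ sSup ((fun zbar => ⟪Ψ' y zbar, d⟫)
          '' {zbar ∈ Z | Ψ y zbar = sSup ((fun z => Ψ y z) '' Z)}) := by
  classical
  set Φ : EuclideanSpace ℝ (Fin m) → ℝ := fun y' => sSup ((fun z => Ψ y' z) '' Z) with hΦdef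
  set quot : EuclideanSpace ℝ (Fin m) × ℝ → ℝ :=
    fun p => (Φ (p.1 + p.2 • d) - Φ p.1) / p.2 with hquotdef
  set S : ℝ := sSup ((fun zbar => ⟪Ψ' y zbar, d⟫)
      '' {zbar ∈ Z | Ψ y zbar = Φ y}) with hSdef
  set F : Filter (EuclideanSpace ℝ (Fin m) × ℝ) :=
    (nhds y) ×ˢ (nhdsWithin 0 (Set.Ioi (0 : ℝ))) with hFdef
  show Filter.limsup quot F ≤ S
  have hl0 : 0 ≤ l := le_trans (norm_nonneg _) (hbound y hZne.some hZne.some_mem)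
  have hcontz : ∀ a : EuclideanSpace ℝ (Fin m), Continuous fun z => Ψ a z := fun a => by
    exact hΨ.comp (Continuous.prodMk_right a)
  have hbdd : ∀ a : EuclideanSpace ℝ (Fin m), BddAbove ((fun z => Ψ a z) '' Z) := fun a =>
    (hZc.image (hcontz a)).bddAbove
  have hne : ∀ a : EuclideanSpace ℝ (Fin m), ((fun z => Ψ a z) '' Z).Nonempty := fun a =>
    hZne.image _
  -- uniform Lipschitz bound for Ψ in the first variable
  have hΨlip : ∀ z ∈ Z, ∀ a b : EuclideanSpace ℝ (Fin m), ‖Ψ a z - Ψ b z‖ ≤ l * ‖a - b‖ := by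
    intro z hz a b
    exact convex_univ.norm_image_sub_le_of_norm_hasFDerivWithin_le
      (f := fun y' => Ψ y' z)
      (f' := fun x => (InnerProductSpace.toDual ℝ (EuclideanSpace ℝ (Fin m))) (Ψ' x z))
      (fun x _ => ((hgrad x z hz).hasFDerivAt).hasFDerivWithinAt)
      (fun x _ => by
        rw [LinearIsometryEquiv.norm_map]
        exact hbound x z hz)
      (mem_univ b) (mem_univ a)
  have hΦle : ∀ a b : EuclideanSpace ℝ (Fin m), Φ a ≤ Φ b + l * ‖a - b‖ := by
    intro a b
    apply csSup_le (hne a)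
    rintro x ⟨z, hz, rfl⟩
    have h1 := hΨlip z hz a b
    have h2 : Ψ b z ≤ Φ b := le_csSup (hbdd b) ⟨z, hz, rfl⟩
    rw [Real.norm_eq_abs] at h1
    have := le_abs_self (Ψ a z - Ψ b z)
    linarith
  have hΦcont : Continuous Φ := by
    apply LipschitzWith.continuous (K := l.toNNReal)
    apply LipschitzWith.of_dist_le_mul
    intro a b
    rw [Real.dist_eq, dist_eq_norm]
    have h1 := hΦle a b
    have h2 := hΦle b a
    rw [norm_sub_rev b a] at h2
    have hK : (l.toNNReal : ℝ) = max l 0 := Real.coe_toNNReal' l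
    rw [hK, abs_le]
    have hmax : l * ‖a - b‖ ≤ max l 0 * ‖a - b‖ :=
      mul_le_mul_of_nonneg_right (le_max_left l 0) (norm_nonneg _)
    constructor <;> linarith
  -- boundedness of the candidate sup
  have hSbdd : BddAbove ((fun zbar => ⟪Ψ' y zbar, d⟫)
      '' {zbar ∈ Z | Ψ y zbar = Φ y}) := by
    refine ⟨l * ‖d‖, ?_⟩
    rintro x ⟨z, ⟨hz, _⟩, rfl⟩
    calc ⟪Ψ' y z, d⟫ ≤ ‖Ψ' y z‖ * ‖d‖ := real_inner_le_norm _ _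
      _ ≤ l * ‖d‖ := mul_le_mul_of_nonneg_right (hbound y z hz) (norm_nonneg _)
  have hIoi : ∀ᶠ p : EuclideanSpace ℝ (Fin m) × ℝ in F, p.2 ∈ Set.Ioi (0 : ℝ) :=
    Filter.Eventually.prod_inr (eventually_mem_nhdsWithin) _
  -- lower bound (for coboundedness)
  have hev : ∀ᶠ p : EuclideanSpace ℝ (Fin m) × ℝ in F, -(l * ‖d‖) ≤ quot p := by
    filter_upwards [hIoi] with p hp
    have ht : (0 : ℝ) < p.2 := hp
    show -(l * ‖d‖) ≤ (Φ (p.1 + p.2 • d) - Φ p.1) / p.2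
    rw [le_div_iff₀ ht]
    have h := hΦle p.1 (p.1 + p.2 • d)
    have hnorm : ‖p.1 - (p.1 + p.2 • d)‖ = p.2 * ‖d‖ := by
      rw [sub_add_eq_sub_sub, sub_self, zero_sub, norm_neg, norm_smul,
        Real.norm_eq_abs, abs_of_pos ht]
    rw [hnorm] at h
    nlinarith
  -- the key eventual bound
  have key : ∀ ε : ℝ, 0 < ε → ∀ᶠ p in F, quot p ≤ S + ε := by
    intro ε hε
    by_contra hcon
    have hfreq : ∃ᶠ p in F, ¬ quot p ≤ S + ε := Filter.not_eventually.mp hcon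
    have hfreq2 : ∃ᶠ p in F, (S + ε < quot p) ∧ p.2 ∈ Set.Ioi (0 : ℝ) :=
      (hfreq.mono fun p h => not_le.mp h).and_eventually hIoi
    obtain ⟨u, hu, hup⟩ := Filter.exists_seq_forall_of_frequently hfreq2
    rw [hFdef, Filter.tendsto_prod_iff'] at hu
    have hu1 : Tendsto (fun n => (u n).1) atTop (nhds y) := hu.1
    have hu2' : Tendsto (fun n => (u n).2) atTop (nhdsWithin 0 (Set.Ioi (0 : ℝ))) := hu.2
    have hu2 : Tendsto (fun n => (u n).2) atTop (nhds 0) := hu2'.mono_right nhdsWithin_le_nhds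
    have htpos : ∀ n, (0 : ℝ) < (u n).2 := fun n => (hup n).2
    -- maximizer + mean value theorem for each n
    have hex : ∀ n, ∃ z ∈ Z, ∃ c ∈ Set.Ioo (0 : ℝ) (u n).2,
        Ψ ((u n).1 + (u n).2 • d) z = Φ ((u n).1 + (u n).2 • d) ∧
        quot (u n) ≤ ⟪Ψ' ((u n).1 + c • d) z, d⟫ := by
      intro n
      set a := (u n).1 with ha
      set t := (u n).2 with ht
      have ht0 : (0 : ℝ) < t := htpos n
      obtain ⟨z, hz, hzmax⟩ := hZc.exists_isMaxOn hZne ((hcontz (a + t • d)).continuousOn)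
      have hmax_eq : Ψ (a + t • d) z = Φ (a + t • d) := by
        refine le_antisymm (le_csSup (hbdd _) ⟨z, hz, rfl⟩) ?_
        exact csSup_le (hne _) (by rintro x ⟨w, hw, rfl⟩; exact hzmax hw)
      have hgderiv : ∀ s : ℝ, HasDerivAt (fun s' : ℝ => Ψ (a + s' • d) z)
          ⟪Ψ' (a + s • d) z, d⟫ s := by
        intro s
        have hline : HasDerivAt (fun s' : ℝ => a + s' • d) d s := by
          simpa using ((hasDerivAt_id s).smul_const d).const_add a
        have h2 := ((hgrad (a + s • d) z hz).hasFDerivAt).comp_hasDerivAt s hline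
        simpa only [Function.comp_def, InnerProductSpace.toDual_apply_apply] using h2
      obtain ⟨c, hc, hceq⟩ := exists_hasDerivAt_eq_slope (fun s' : ℝ => Ψ (a + s' • d) z)
        (fun s => ⟪Ψ' (a + s • d) z, d⟫) ht0
        (fun s _ => (hgderiv s).continuousAt.continuousWithinAt)
        (fun s _ => hgderiv s)
      refine ⟨z, hz, c, hc, hmax_eq, ?_⟩
      have hΨb : Ψ a z ≤ Φ a := le_csSup (hbdd a) ⟨z, hz, rfl⟩
      have heq2 : ⟪Ψ' (a + c • d) z, d⟫ = (Ψ (a + t • d) z - Ψ a z) / t := by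
        simpa only [zero_smul, add_zero, sub_zero] using hceq
      show (Φ (a + t • d) - Φ a) / t ≤ ⟪Ψ' (a + c • d) z, d⟫
      rw [heq2]
      gcongr
      exact hmax_eq.ge
    choose zf hzfZ cf hcf hmaxf hquotf using hex
    obtain ⟨zbar, hzbarZ, φ, hφ, hzφ⟩ := hZc.tendsto_subseq hzfZ
    have hφt : Tendsto φ atTop atTop := hφ.tendsto_atTop
    have hcf0 : Tendsto cf atTop (nhds 0) :=
      tendsto_of_tendsto_of_tendsto_of_le_of_le tendsto_const_nhds hu2
        (fun n => (hcf n).1.le) (fun n => (hcf n).2.le)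
    have hξ : Tendsto (fun n => (u n).1 + cf n • d) atTop (nhds y) := by
      have := hu1.add (hcf0.smul_const d)
      simpa using this
    have harg : Tendsto (fun n => (u n).1 + (u n).2 • d) atTop (nhds y) := by
      have := hu1.add (hu2.smul_const d)
      simpa using this
    have hmaxbar : Ψ y zbar = Φ y := by
      have hA : Tendsto (fun k => Ψ ((u (φ k)).1 + (u (φ k)).2 • d) (zf (φ k))) atTop
          (nhds (Ψ y zbar)) := by
        have h1 : Tendsto (fun k => (((u (φ k)).1 + (u (φ k)).2 • d), zf (φ k))) atTop
            (nhds (y, zbar)) := (harg.comp hφt).prodMk_nhds hzφ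
        exact (hΨ.tendsto (y, zbar)).comp h1
      have hB : Tendsto (fun k => Ψ ((u (φ k)).1 + (u (φ k)).2 • d) (zf (φ k))) atTop
          (nhds (Φ y)) := by
        have heq : (fun k => Ψ ((u (φ k)).1 + (u (φ k)).2 • d) (zf (φ k)))
            = fun k => Φ ((u (φ k)).1 + (u (φ k)).2 • d) := funext fun k => hmaxf (φ k)
        rw [heq]
        exact (hΦcont.tendsto y).comp (harg.comp hφt)
      exact tendsto_nhds_unique hA hB
    have hlim : Tendsto (fun k => ⟪Ψ' ((u (φ k)).1 + cf (φ k) • d) (zf (φ k)), d⟫) atTop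
        (nhds ⟪Ψ' y zbar, d⟫) := by
      have h1 : Tendsto (fun k => (((u (φ k)).1 + cf (φ k) • d), zf (φ k))) atTop
          (nhds (y, zbar)) := (hξ.comp hφt).prodMk_nhds hzφ
      have h2 : Tendsto (fun k => Ψ' ((u (φ k)).1 + cf (φ k) • d) (zf (φ k))) atTop
          (nhds (Ψ' y zbar)) := (hΨ'cont.tendsto (y, zbar)).comp h1
      exact h2.inner tendsto_const_nhds
    have hge : S + ε ≤ ⟪Ψ' y zbar, d⟫ :=
      ge_of_tendsto' hlim fun k => ((hup (φ k)).1.le).trans (hquotf (φ k))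
    have hSle : ⟪Ψ' y zbar, d⟫ ≤ S :=
      le_csSup hSbdd ⟨zbar, ⟨hzbarZ, hmaxbar⟩, rfl⟩
    linarith
  -- conclude
  haveI : F.NeBot := by rw [hFdef]; infer_instance
  have hcb : Filter.IsCoboundedUnder (· ≤ ·) F quot :=
    Filter.isCoboundedUnder_le_of_eventually_le F hev
  refine le_of_forall_pos_le_add fun ε hε => ?_
  exact Filter.limsup_le_of_le hcb (key ε hε)
end

section
/- Let Z ⊆ ℝ^q be nonempty and compact, let φ : ℝ^m → ℝ be convex, let n ≥ 1, and for each i ∈ {1,…,n} let Ψ_i : ℝ^m × ℝ^q → ℝ be continuous such that each y ↦ Ψ_i(y,z) is differentiable with gradient ∇_yΨ_i(y,z), with (y,z) ↦ ∇_yΨ_i(y,z) continuous and ‖∇_yΨ_i(y,z)‖ ≤ l for all y, z ∈ Z. Define g(y) = φ(y) + (1/n) Σ_{i=1}^n max_{z ∈ Z} Ψ_i(y,z). Then g is Clarke regular: for every y ∈ ℝ^m and every d ∈ ℝ^m there exists a real number c such that (g(y + t·d) − g(y))/t → c as t → 0⁺, and limsup_{y' → y, t → 0⁺} (g(y' + t·d)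 − g(y'))/t = c, the limsup being taken along the product of the neighborhood filter of y and the right-neighborhood filter of 0. -/
open Filter Real Set Metric

/-- The primal min-sum-max objective `g(y) = φ(y) + (1/n) Σᵢ max_{z ∈ Z} Ψᵢ(y, z)`. -/
noncomputable def primalG {m q n : ℕ} (Z : Set (EuclideanSpace ℝ (Fin q)))
    (φ : EuclideanSpace ℝ (Fin m) → ℝ)
    (Ψ : Fin n → EuclideanSpace ℝ (Fin m) → EuclideanSpace ℝ (Fin q) → ℝ)
    (y : EuclideanSpace ℝ (Fin m)) : ℝ :=
  φ y + (1 / (n : ℝ)) * ∑ i : Fin n, sSup ((fun z => Ψ i y z) '' Z)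

/-- Comparison of suprema over a nonempty set. -/
lemma clarke_sup_comp {α : Type*} {Z : Set α} (hZne : Z.Nonempty)
    {f g : α → ℝ} {c : ℝ} (hbg : BddAbove (g '' Z))
    (hfg : ∀ z ∈ Z, f z ≤ g z + c) : sSup (f '' Z) ≤ sSup (g '' Z) + c := by
  apply csSup_le (hZne.image f)
  rintro x ⟨z, hz, rfl⟩
  exact (hfg z hz).trans (add_le_add_left (le_csSup hbg ⟨z, hz, rfl⟩) c)

/-- Abstract criterion for Clarke regularity at a point in a direction. -/
lemma clarke_key_abstract {E : Type*} [NormedAddCommGroup E] [NormedSpace ℝ E]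
    (h : E → ℝ) (y d : E) (C : ℝ)
    (hbdd : ∀ᶠ p : E × ℝ in (nhds y) ×ˢ (nhdsWithin 0 (Set.Ioi (0:ℝ))),
      |(h (p.1 + p.2 • d) - h p.1) / p.2| ≤ C)
    (hkey : ∀ ε > (0:ℝ), ∃ δ > (0:ℝ), ∀ s ∈ Set.Ioo (0:ℝ) δ,
      ∀ᶠ p : E × ℝ in (nhds y) ×ˢ (nhdsWithin 0 (Set.Ioi (0:ℝ))),
        (h (p.1 + p.2 • d) - h p.1) / p.2 ≤ (h (y + s • d) - h y) / s + ε) :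
    ∃ c : ℝ,
      Tendsto (fun t : ℝ => (h (y + t • d) - h y) / t)
        (nhdsWithin 0 (Set.Ioi (0 : ℝ))) (nhds c) ∧
      Filter.limsup (fun p : E × ℝ => (h (p.1 + p.2 • d) - h p.1) / p.2)
        ((nhds y) ×ˢ (nhdsWithin 0 (Set.Ioi (0 : ℝ)))) = c := by
  set L : Filter (E × ℝ) := (nhds y) ×ˢ (nhdsWithin 0 (Set.Ioi (0:ℝ))) with hL
  set Q : E × ℝ → ℝ := fun p => (h (p.1 + p.2 • d) - h p.1) / p.2 with hQ
  set q0 : ℝ → ℝ := fun t => (h (y + t • d) - h y) / t with hq0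
  haveI hne0 : (nhdsWithin (0:ℝ) (Set.Ioi (0:ℝ))).NeBot := nhdsGT_neBot 0
  haveI hLne : L.NeBot := Filter.prod_neBot.2 ⟨inferInstance, hne0⟩
  have hmap : Tendsto (fun t : ℝ => ((y : E), t)) (nhdsWithin 0 (Set.Ioi (0:ℝ))) L :=
    tendsto_const_nhds.prodMk tendsto_id
  have hq0Q : ∀ t, q0 t = Q (y, t) := fun t => rfl
  have hbdd0 : ∀ᶠ t in nhdsWithin (0:ℝ) (Set.Ioi (0:ℝ)), |q0 t| ≤ C := hmap.eventually hbdd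
  have hBle : IsBoundedUnder (· ≤ ·) L Q :=
    isBoundedUnder_of_eventually_le (a := C) (hbdd.mono fun p hp => (abs_le.1 hp).2)
  have hBge : IsBoundedUnder (· ≥ ·) L Q :=
    isBoundedUnder_of_eventually_ge (a := -C) (hbdd.mono fun p hp => (abs_le.1 hp).1)
  have hble0 : IsBoundedUnder (· ≤ ·) (nhdsWithin (0:ℝ) (Set.Ioi (0:ℝ))) q0 :=
    isBoundedUnder_of_eventually_le (a := C) (hbdd0.mono fun t ht => (abs_le.1 ht).2)
  have hbge0 : IsBoundedUnder (· ≥ ·) (nhdsWithin (0:ℝ) (Set.Ioi (0:ℝ))) q0 :=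
    isBoundedUnder_of_eventually_ge (a := -C) (hbdd0.mono fun t ht => (abs_le.1 ht).1)
  set c : ℝ := liminf q0 (nhdsWithin 0 (Set.Ioi (0:ℝ))) with hc
  have stepA : limsup Q L ≤ c := by
    apply le_of_forall_pos_le_add
    intro ε hε
    obtain ⟨δ, hδ, hδ'⟩ := hkey (ε/2) (by positivity)
    have hfreq : ∃ᶠ t in nhdsWithin (0:ℝ) (Set.Ioi (0:ℝ)), q0 t < c + ε/2 := by
      apply frequently_lt_of_liminf_lt (hble0.isCobounded_ge)
      rw [← hc]; linarith
    obtain ⟨s, hs1, hs2⟩ := (hfreq.and_eventually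
      (Ioo_mem_nhdsGT_of_mem (show (0:ℝ) ∈ Set.Ico 0 δ from ⟨le_refl _, hδ⟩))).exists
    have hev : ∀ᶠ p in L, Q p ≤ c + ε := by
      filter_upwards [hδ' s hs2] with p hp
      calc Q p ≤ q0 s + ε/2 := hp
        _ ≤ c + ε := by linarith
    calc limsup Q L ≤ c + ε := limsup_le_of_le hBge.isCobounded_le hev
      _ = c + ε := rfl
  have hmaple : Filter.map (fun t : ℝ => ((y:E), t)) (nhdsWithin 0 (Set.Ioi (0:ℝ))) ≤ L := hmap
  have hlimsup_comp : limsup q0 (nhdsWithin (0:ℝ) (Set.Ioi (0:ℝ)))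
      = limsup Q (Filter.map (fun t : ℝ => ((y:E), t)) (nhdsWithin 0 (Set.Ioi (0:ℝ)))) := by
    rw [Filter.limsup, Filter.limsup, Filter.map_map]
    rfl
  have hcob : IsCoboundedUnder (· ≤ ·)
      (Filter.map (fun t : ℝ => ((y:E), t)) (nhdsWithin 0 (Set.Ioi (0:ℝ)))) Q := by
    have h := hbge0.isCobounded_le
    rw [Filter.IsCoboundedUnder, Filter.map_map]; exact h
  have stepB : c ≤ limsup Q L := by
    have h1 : c ≤ limsup q0 (nhdsWithin (0:ℝ) (Set.Ioi (0:ℝ))) :=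
      liminf_le_limsup hble0 hbge0
    have h2 : limsup Q (Filter.map (fun t : ℝ => ((y:E), t)) (nhdsWithin 0 (Set.Ioi (0:ℝ))))
        ≤ limsup Q L := limsup_le_limsup_of_le hmaple hcob hBle
    calc c ≤ limsup q0 (nhdsWithin (0:ℝ) (Set.Ioi (0:ℝ))) := h1
      _ ≤ limsup Q L := by rw [hlimsup_comp]; exact h2
  have hlimL : limsup Q L = c := le_antisymm stepA stepB
  have hlimsup0 : limsup q0 (nhdsWithin (0:ℝ) (Set.Ioi (0:ℝ))) = c := by
    have h1 : c ≤ limsup q0 (nhdsWithin (0:ℝ) (Set.Ioi (0:ℝ))) := liminf_le_limsup hble0 hbge0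
    have h2 : limsup q0 (nhdsWithin (0:ℝ) (Set.Ioi (0:ℝ))) ≤ c := by
      calc limsup q0 (nhdsWithin (0:ℝ) (Set.Ioi (0:ℝ)))
          = limsup Q (Filter.map (fun t : ℝ => ((y:E), t)) (nhdsWithin 0 (Set.Ioi (0:ℝ)))) :=
            hlimsup_comp
        _ ≤ limsup Q L := limsup_le_limsup_of_le hmaple hcob hBle
        _ = c := hlimL
    exact le_antisymm h2 h1
  refine ⟨c, ?_, hlimL⟩
  exact tendsto_of_liminf_eq_limsup rfl hlimsup0 hble0 hbge0

set_option maxHeartbeats 2000000 in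
/-- Clarke regularity of the primal function: at every point and in every
direction, the one-sided directional derivative of `g` exists and equals the Clarke
generalized directional derivative. -/
theorem primal_clarke_regular {m q : ℕ}
    (Z : Set (EuclideanSpace ℝ (Fin q))) (hZc : IsCompact Z) (hZne : Z.Nonempty)
    (φ : EuclideanSpace ℝ (Fin m) → ℝ) (hφ : ConvexOn ℝ Set.univ φ)
    (n : ℕ) (hn : 1 ≤ n)
    (Ψ : Fin n → EuclideanSpace ℝ (Fin m) → EuclideanSpace ℝ (Fin q) → ℝ)
    (hΨ : ∀ i, Continuous fun p : EuclideanSpace ℝ (Fin m) × EuclideanSpace ℝ (Fin q) =>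
      Ψ i p.1 p.2)
    (Ψ' : Fin n → EuclideanSpace ℝ (Fin m) → EuclideanSpace ℝ (Fin q) →
      EuclideanSpace ℝ (Fin m))
    (hgrad : ∀ i (y : EuclideanSpace ℝ (Fin m)), ∀ z ∈ Z,
      HasGradientAt (fun y' => Ψ i y' z) (Ψ' i y z) y)
    (hΨ'cont : ∀ i, Continuous fun p : EuclideanSpace ℝ (Fin m) × EuclideanSpace ℝ (Fin q) =>
      Ψ' i p.1 p.2)
    (l : ℝ)
    (hbound : ∀ i (y : EuclideanSpace ℝ (Fin m)), ∀ z ∈ Z, ‖Ψ' i y z‖ ≤ l) :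
    ∀ y d : EuclideanSpace ℝ (Fin m), ∃ c : ℝ,
      Tendsto (fun t : ℝ => (primalG Z φ Ψ (y + t • d) - primalG Z φ Ψ y) / t)
        (nhdsWithin 0 (Set.Ioi (0 : ℝ))) (nhds c) ∧
      Filter.limsup
          (fun p : EuclideanSpace ℝ (Fin m) × ℝ =>
            (primalG Z φ Ψ (p.1 + p.2 • d) - primalG Z φ Ψ p.1) / p.2)
          ((nhds y) ×ˢ (nhdsWithin 0 (Set.Ioi (0 : ℝ)))) = c := by
  intro y d
  classical
  haveI : Nonempty (Fin n) := ⟨⟨0, hn⟩⟩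
  have hn0 : (n : ℝ) ≠ 0 := Nat.cast_ne_zero.2 (by omega)
  obtain ⟨z0, hz0⟩ := hZne
  have hZne' : Z.Nonempty := ⟨z0, hz0⟩
  have hl0 : 0 ≤ l := le_trans (norm_nonneg _) (hbound (Classical.arbitrary _) y z0 hz0)
  have hφcont : Continuous φ := by
    exact continuousOn_univ.1 (hφ.continuousOn isOpen_univ)
  -- Lipschitz property of `Ψ i · z`
  have hlip : ∀ i, ∀ z ∈ Z, ∀ a b : EuclideanSpace ℝ (Fin m),
      |Ψ i b z - Ψ i a z| ≤ l * ‖b - a‖ := by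
    intro i z hz a b
    have := Convex.norm_image_sub_le_of_norm_hasFDerivWithin_le
      (f := fun y' => Ψ i y' z)
      (f' := fun x => InnerProductSpace.toDual ℝ _ (Ψ' i x z))
      (fun x _ => ((hgrad i x z hz).hasFDerivAt).hasFDerivWithinAt)
      (fun x _ => by rw [LinearIsometryEquiv.norm_map]; exact hbound i x z hz)
      convex_univ (mem_univ a) (mem_univ b)
    simpa [Real.norm_eq_abs] using this
  have hbdda : ∀ i (a : EuclideanSpace ℝ (Fin m)), BddAbove ((fun z => Ψ i a z) '' Z) :=
    fun i a => hZc.bddAbove_image (((hΨ i).comp (Continuous.prodMk_right a)).continuousOn)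
  set M : Fin n → EuclideanSpace ℝ (Fin m) → ℝ :=
    fun i a => sSup ((fun z => Ψ i a z) '' Z) with hMdef
  have hdec : ∀ (a : EuclideanSpace ℝ (Fin m)) (t : ℝ),
      (primalG Z φ Ψ (a + t • d) - primalG Z φ Ψ a) / t
        = (φ (a + t • d) - φ a) / t
          + (1 / (n:ℝ)) * ∑ i, (M i (a + t • d) - M i a) / t := by
    intro a t
    have h1 : ∑ i, (M i (a + t • d) - M i a) / t
        = ((∑ i, M i (a + t • d)) - ∑ i, M i a) / t := by
      rw [← Finset.sum_div, Finset.sum_sub_distrib]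
    rw [h1]
    simp only [primalG, hMdef]
    ring
  have hMleM : ∀ i (a b : EuclideanSpace ℝ (Fin m)), M i b ≤ M i a + l * ‖b - a‖ := by
    intro i a b
    exact clarke_sup_comp hZne' (hbdda i a)
      (fun z hz => by have := (abs_le.1 (hlip i z hz a b)).2; linarith)
  have hMabs : ∀ i (a b : EuclideanSpace ℝ (Fin m)), |M i b - M i a| ≤ l * ‖b - a‖ := by
    intro i a b
    rw [abs_sub_le_iff]
    constructor
    · have := hMleM i a b; linarith
    · have h := hMleM i b a
      rw [norm_sub_rev] at h; linarith
  have hinb : ∀ i, ∀ z ∈ Z, |(inner ℝ (Ψ' i y z) d : ℝ)| ≤ l * ‖d‖ := fun i z hz =>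
    (abs_real_inner_le_norm _ _).trans
      (mul_le_mul_of_nonneg_right (hbound i y z hz) (norm_nonneg d))
  set F : Fin n → EuclideanSpace ℝ (Fin m) → ℝ → ℝ :=
    fun i a t => sSup ((fun z => Ψ i a z + t * (inner ℝ (Ψ' i y z) d : ℝ)) '' Z) with hFdef
  have hbddF : ∀ i (a : EuclideanSpace ℝ (Fin m)) (t : ℝ),
      BddAbove ((fun z => Ψ i a z + t * (inner ℝ (Ψ' i y z) d : ℝ)) '' Z) := by
    intro i a t
    refine ⟨M i a + |t| * (l * ‖d‖), ?_⟩
    rintro x ⟨z, hz, rfl⟩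
    have h1 : Ψ i a z ≤ M i a := le_csSup (hbdda i a) ⟨z, hz, rfl⟩
    have h2 : t * (inner ℝ (Ψ' i y z) d : ℝ) ≤ |t| * (l * ‖d‖) := by
      calc t * (inner ℝ (Ψ' i y z) d : ℝ) ≤ |t * (inner ℝ (Ψ' i y z) d : ℝ)| := le_abs_self _
        _ = |t| * |(inner ℝ (Ψ' i y z) d : ℝ)| := abs_mul _ _
        _ ≤ |t| * (l * ‖d‖) := mul_le_mul_of_nonneg_left (hinb i z hz) (abs_nonneg t)
    exact add_le_add h1 h2
  have hF0 : ∀ i (a : EuclideanSpace ℝ (Fin m)), F i a 0 = M i a := by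
    intro i a; simp [hFdef, hMdef]
  have hFslope : ∀ i (a : EuclideanSpace ℝ (Fin m)) {t s : ℝ}, 0 < t → t ≤ s →
      (F i a t - M i a) / t ≤ (F i a s - M i a) / s := by
    intro i a t s ht hts
    have hs : 0 < s := lt_of_lt_of_le ht hts
    have key : F i a t ≤ (1 - t/s) * M i a + (t/s) * F i a s := by
      apply csSup_le (hZne'.image _)
      rintro x ⟨z, hz, rfl⟩
      dsimp only
      have h1 : Ψ i a z ≤ M i a := le_csSup (hbdda i a) ⟨z, hz, rfl⟩
      have h2 : Ψ i a z + s * (inner ℝ (Ψ' i y z) d : ℝ) ≤ F i a s :=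
        le_csSup (hbddF i a s) ⟨z, hz, rfl⟩
      have e : Ψ i a z + t * (inner ℝ (Ψ' i y z) d : ℝ)
          = (1 - t/s) * (Ψ i a z)
            + (t/s) * (Ψ i a z + s * (inner ℝ (Ψ' i y z) d : ℝ)) := by
        field_simp
        ring
      rw [e]
      have h3 : 0 ≤ 1 - t/s := by
        have : t/s ≤ 1 := (div_le_one hs).2 hts
        linarith
      have h4 : 0 ≤ t/s := by positivity
      exact add_le_add (mul_le_mul_of_nonneg_left h1 h3) (mul_le_mul_of_nonneg_left h2 h4)
    have key2 : s * F i a t ≤ (s - t) * M i a + t * F i a s := by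
      have h := mul_le_mul_of_nonneg_left key hs.le
      calc s * F i a t ≤ s * ((1 - t/s) * M i a + (t/s) * F i a s) := h
        _ = (s - t) * M i a + t * F i a s := by field_simp
    rw [div_le_div_iff₀ ht hs]
    nlinarith [key2]
  have hFy' : ∀ i (s : ℝ) (a : EuclideanSpace ℝ (Fin m)),
      F i a s ≤ F i y s + l * ‖a - y‖ := by
    intro i s a
    exact clarke_sup_comp hZne' (hbddF i y s)
      (fun z hz => by have := (abs_le.1 (hlip i z hz y a)).2; linarith)
  -- the mean value / uniform continuity estimate
  have keyPsi : ∀ i, ∀ ε > (0:ℝ), ∃ δ > (0:ℝ), ∀ a ∈ ball y δ, ∀ t ∈ Ioo (0:ℝ) δ, ∀ z ∈ Z,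
      |Ψ i (a + t • d) z - Ψ i a z - t * (inner ℝ (Ψ' i y z) d : ℝ)| ≤ ε * t := by
    intro i ε hε
    have hKc : IsCompact ((closedBall y 1) ×ˢ Z) := (isCompact_closedBall y 1).prod hZc
    have hUC := hKc.uniformContinuousOn_of_continuous ((hΨ'cont i).continuousOn)
    rw [Metric.uniformContinuousOn_iff] at hUC
    obtain ⟨δ₁, hδ₁, hδ₁'⟩ := hUC (ε / (‖d‖ + 1)) (by positivity)
    refine ⟨min δ₁ 1 / (‖d‖ + 1), by positivity, ?_⟩
    intro a ha t ht z hz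
    set δ := min δ₁ 1 / (‖d‖ + 1) with hδ
    have hδpos : 0 < δ := by positivity
    have hpts : ∀ s ∈ Icc (0:ℝ) t, ‖a + s • d - y‖ < min δ₁ 1 := by
      intro s hs
      have h1 : ‖a + s • d - y‖ ≤ ‖a - y‖ + s * ‖d‖ := by
        have e : a + s • d - y = (a - y) + s • d := by abel
        rw [e]
        calc ‖(a - y) + s • d‖ ≤ ‖a - y‖ + ‖s • d‖ := norm_add_le _ _
          _ = ‖a - y‖ + s * ‖d‖ := by rw [norm_smul, Real.norm_eq_abs, abs_of_nonneg hs.1]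
      have h2 : ‖a - y‖ < δ := mem_ball_iff_norm.1 ha
      have h3 : s * ‖d‖ ≤ t * ‖d‖ := mul_le_mul_of_nonneg_right hs.2 (norm_nonneg d)
      have h4 : t < δ := ht.2
      have h5 : δ * (‖d‖ + 1) = min δ₁ 1 := by
        rw [hδ]; field_simp
      nlinarith [norm_nonneg d, norm_nonneg (a - y)]
    have hmem : ∀ s ∈ Icc (0:ℝ) t, (a + s • d, z) ∈ (closedBall y 1) ×ˢ Z := by
      intro s hs
      refine ⟨?_, hz⟩
      have := hpts s hs
      simp only [mem_closedBall, dist_eq_norm]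
      exact le_of_lt (lt_of_lt_of_le this (min_le_right _ _))
    have hyz : ((y : EuclideanSpace ℝ (Fin m)), z) ∈ (closedBall y 1) ×ˢ Z :=
      ⟨mem_closedBall_self zero_le_one, hz⟩
    have hclose : ∀ s ∈ Icc (0:ℝ) t,
        ‖Ψ' i (a + s • d) z - Ψ' i y z‖ ≤ ε / (‖d‖ + 1) := by
      intro s hs
      have hd : dist ((a + s • d, z) : _ × _) (y, z) < δ₁ := by
        rw [Prod.dist_eq]
        simp only [dist_self, dist_eq_norm]
        exact max_lt (lt_of_lt_of_le (hpts s hs) (min_le_left _ _)) hδ₁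
      have := hδ₁' _ (hmem s hs) _ hyz hd
      rw [dist_eq_norm] at this
      exact le_of_lt this
    set c0 : ℝ := (inner ℝ (Ψ' i y z) d : ℝ) with hc0
    have hderiv : ∀ s ∈ Icc (0:ℝ) t,
        HasDerivAt (fun u : ℝ => Ψ i (a + u • d) z - u * c0)
          ((inner ℝ (Ψ' i (a + s • d) z) d : ℝ) - c0) s := by
      intro s hs
      have h1 : HasDerivAt (fun u : ℝ => a + u • d) d s := by
        simpa using ((hasDerivAt_id s).smul_const d).const_add a
      have h2 : HasFDerivAt (fun y' => Ψ i y' z)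
          (InnerProductSpace.toDual ℝ _ (Ψ' i (a + s • d) z)) (a + s • d) :=
        (hgrad i (a + s • d) z hz).hasFDerivAt
      have h3 : HasDerivAt (fun u : ℝ => Ψ i (a + u • d) z)
          ((inner ℝ (Ψ' i (a + s • d) z) d : ℝ)) s := by
        have := h2.comp_hasDerivAt s h1
        exact this
      exact (h3.sub ((hasDerivAt_id' s).mul_const c0)).congr_deriv (by ring)
    have hbnd : ∀ s ∈ Icc (0:ℝ) t, ‖(inner ℝ (Ψ' i (a + s • d) z) d : ℝ) - c0‖ ≤ ε := by
      intro s hs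
      have e : (inner ℝ (Ψ' i (a + s • d) z) d : ℝ) - c0
          = (inner ℝ (Ψ' i (a + s • d) z - Ψ' i y z) d : ℝ) := by
        rw [hc0, inner_sub_left]
      rw [e, Real.norm_eq_abs]
      calc |(inner ℝ (Ψ' i (a + s • d) z - Ψ' i y z) d : ℝ)|
          ≤ ‖Ψ' i (a + s • d) z - Ψ' i y z‖ * ‖d‖ := abs_real_inner_le_norm _ _
        _ ≤ (ε / (‖d‖ + 1)) * ‖d‖ := mul_le_mul_of_nonneg_right (hclose s hs) (norm_nonneg d)
        _ ≤ ε := by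
          rw [div_mul_eq_mul_div, div_le_iff₀ (by positivity)]
          nlinarith [norm_nonneg d]
    have hMVT := Convex.norm_image_sub_le_of_norm_hasDerivWithin_le
      (f := fun u : ℝ => Ψ i (a + u • d) z - u * c0)
      (f' := fun s : ℝ => (inner ℝ (Ψ' i (a + s • d) z) d : ℝ) - c0)
      (fun s hs => (hderiv s hs).hasDerivWithinAt) hbnd (convex_Icc 0 t)
      (left_mem_Icc.2 ht.1.le) (right_mem_Icc.2 ht.1.le)
    simp only [zero_smul, add_zero, zero_mul, sub_zero, Real.norm_eq_abs] at hMVT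
    calc |Ψ i (a + t • d) z - Ψ i a z - t * c0|
        = |(Ψ i (a + t • d) z - t * c0) - Ψ i a z| := by congr 1; ring
      _ ≤ ε * |t| := hMVT
      _ = ε * t := by rw [abs_of_pos ht.1]
  -- key inequality for each max-component
  have keyM : ∀ i, ∀ ε > (0:ℝ), ∃ δ > (0:ℝ), ∀ s ∈ Ioo (0:ℝ) δ,
      ∀ᶠ p : EuclideanSpace ℝ (Fin m) × ℝ in (nhds y) ×ˢ (nhdsWithin 0 (Set.Ioi (0:ℝ))),
        (M i (p.1 + p.2 • d) - M i p.1) / p.2 ≤ (M i (y + s • d) - M i y) / s + ε := by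
    intro i ε hε
    obtain ⟨δ, hδpos, hδ⟩ := keyPsi i (ε/3) (by positivity)
    refine ⟨δ, hδpos, ?_⟩
    intro s hs
    have hev1 : ∀ᶠ a in nhds y, a ∈ ball y (min δ (s * (ε/3) / (2*l+1))) :=
      ball_mem_nhds y (lt_min hδpos (by have := hs.1; positivity))
    have hev2 : ∀ᶠ t in nhdsWithin (0:ℝ) (Ioi 0), t ∈ Ioo (0:ℝ) s :=
      Ioo_mem_nhdsGT_of_mem ⟨le_refl _, hs.1⟩
    filter_upwards [hev1.prod_inl (nhdsWithin (0:ℝ) (Ioi 0)),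
      hev2.prod_inr (nhds y)] with p hp1 hp2
    set a := p.1
    set t := p.2
    have hab : a ∈ ball y δ := ball_subset_ball (min_le_left _ _) hp1
    have hay : ‖a - y‖ < s * (ε/3) / (2*l+1) :=
      lt_of_lt_of_le (mem_ball_iff_norm.1 hp1) (min_le_right _ _)
    have ht : t ∈ Ioo (0:ℝ) δ := ⟨hp2.1, lt_trans hp2.2 hs.2⟩
    have ht0 : 0 < t := hp2.1
    have hs0 : 0 < s := hs.1
    -- step 1 : M i (a + t d) ≤ F i a t + (ε/3) t
    have step1 : M i (a + t • d) ≤ F i a t + (ε/3) * t := by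
      apply clarke_sup_comp hZne' (hbddF i a t)
      intro z hz
      have := (abs_le.1 (hδ a hab t ht z hz)).2
      linarith
    -- step 1' at (y, s) : F i y s ≤ M i (y + s d) + (ε/3) s
    have step1' : F i y s ≤ M i (y + s • d) + (ε/3) * s := by
      apply clarke_sup_comp hZne' (hbdda i (y + s • d))
      intro z hz
      have := (abs_le.1 (hδ y (mem_ball_self hδpos) s hs z hz)).1
      linarith
    have key1 : (M i (a + t • d) - M i a) / t ≤ (F i a t - M i a) / t + ε/3 := by
      have e : (M i (a + t • d) - M i a) / t - (F i a t - M i a) / t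
          = (M i (a + t • d) - F i a t) / t := by ring
      have h : (M i (a + t • d) - F i a t) / t ≤ ε/3 := by
        rw [div_le_iff₀ ht0]
        linarith
      linarith [h, e]
    have key2 : (F i a t - M i a) / t ≤ (F i a s - M i a) / s :=
      hFslope i a ht0 hp2.2.le
    have key3 : (F i a s - M i a) / s ≤ (F i y s - M i y) / s + ε/3 := by
      have h1 : F i a s ≤ F i y s + l * ‖a - y‖ := hFy' i s a
      have h2 : M i y ≤ M i a + l * ‖y - a‖ := hMleM i a y
      rw [norm_sub_rev] at h2
      have h3 : 2 * l * ‖a - y‖ ≤ (ε/3) * s := by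
        have hcase : (0:ℝ) < 2*l+1 := by linarith
        have h4 : (2*l+1) * ‖a - y‖ ≤ s * (ε/3) := by
          calc (2*l+1) * ‖a - y‖ ≤ (2*l+1) * (s * (ε/3) / (2*l+1)) :=
                mul_le_mul_of_nonneg_left hay.le hcase.le
            _ = s * (ε/3) := by field_simp
        nlinarith [norm_nonneg (a - y)]
      have e : (F i a s - M i a) / s - (F i y s - M i y) / s
          = ((F i a s - F i y s) + (M i y - M i a)) / s := by ring
      have h5 : ((F i a s - F i y s) + (M i y - M i a)) / s ≤ ε/3 := by
        rw [div_le_iff₀ hs0]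
        linarith
      linarith [h5, e]
    have key4 : (F i y s - M i y) / s ≤ (M i (y + s • d) - M i y) / s + ε/3 := by
      have e : (F i y s - M i y) / s - (M i (y + s • d) - M i y) / s
          = (F i y s - M i (y + s • d)) / s := by ring
      have h : (F i y s - M i (y + s • d)) / s ≤ ε/3 := by
        rw [div_le_iff₀ hs0]
        linarith
      linarith [h, e]
    linarith
  -- convexity of t ↦ φ (a + t d)
  have hψconv : ∀ a : EuclideanSpace ℝ (Fin m), ConvexOn ℝ univ (fun t : ℝ => φ (a + t • d)) := by
    intro a
    have h := hφ.comp_affineMap (AffineMap.lineMap a (a + d) : ℝ →ᵃ[ℝ] EuclideanSpace ℝ (Fin m))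
    have he : (φ ∘ (AffineMap.lineMap a (a + d) : ℝ →ᵃ[ℝ] EuclideanSpace ℝ (Fin m)))
        = fun t : ℝ => φ (a + t • d) := by
      funext t
      simp only [Function.comp_apply, AffineMap.lineMap_apply]
      congr 1
      simp [vsub_eq_sub, vadd_eq_add]
      abel
    rw [he] at h
    simpa using h
  have hslopeφ : ∀ (a : EuclideanSpace ℝ (Fin m)) {t s : ℝ}, 0 < t → t ≤ s →
      (φ (a + t • d) - φ a) / t ≤ (φ (a + s • d) - φ a) / s := by
    intro a t s ht hts
    have h := (hψconv a).secant_mono (a := (0:ℝ)) (x := t) (y := s)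
      (mem_univ _) (mem_univ _) (mem_univ _) (ne_of_gt ht)
      (ne_of_gt (lt_of_lt_of_le ht hts)) hts
    simpa using h
  have hslopeφ_lower : ∀ (a : EuclideanSpace ℝ (Fin m)) {t : ℝ}, 0 < t →
      φ a - φ (a - d) ≤ (φ (a + t • d) - φ a) / t := by
    intro a t ht
    have h := (hψconv a).secant_mono (a := (0:ℝ)) (x := (-1:ℝ)) (y := t)
      (mem_univ _) (mem_univ _) (mem_univ _) (by norm_num) (ne_of_gt ht) (by linarith)
    have e : a + (-1:ℝ) • d = a - d := by
      simp [neg_smul, sub_eq_add_neg]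
    rw [e] at h
    simp only [sub_zero, zero_smul, add_zero] at h
    have e2 : (φ (a - d) - φ a) / (-1) = φ a - φ (a - d) := by ring
    rw [e2] at h
    exact h
  -- key inequality for φ
  have keyφ : ∀ ε > (0:ℝ), ∃ δ > (0:ℝ), ∀ s ∈ Ioo (0:ℝ) δ,
      ∀ᶠ p : EuclideanSpace ℝ (Fin m) × ℝ in (nhds y) ×ˢ (nhdsWithin 0 (Set.Ioi (0:ℝ))),
        (φ (p.1 + p.2 • d) - φ p.1) / p.2 ≤ (φ (y + s • d) - φ y) / s + ε := by
    intro ε hε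
    refine ⟨1, one_pos, ?_⟩
    intro s hs
    have hcont : Tendsto (fun a => (φ (a + s • d) - φ a) / s) (nhds y)
        (nhds ((φ (y + s • d) - φ y) / s)) := by
      have hc : Continuous (fun a : EuclideanSpace ℝ (Fin m) => (φ (a + s • d) - φ a) / s) :=
        ((hφcont.comp (continuous_id.add continuous_const)).sub hφcont).div_const s
      exact hc.tendsto y
    have hev1 : ∀ᶠ a in nhds y,
        (φ (a + s • d) - φ a) / s < (φ (y + s • d) - φ y) / s + ε :=
      hcont.eventually_lt_const (by linarith)
    have hev2 : ∀ᶠ t in nhdsWithin (0:ℝ) (Ioi 0), t ∈ Ioo (0:ℝ) s :=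
      Ioo_mem_nhdsGT_of_mem ⟨le_refl _, hs.1⟩
    filter_upwards [hev1.prod_inl (nhdsWithin (0:ℝ) (Ioi 0)),
      hev2.prod_inr (nhds y)] with p h1 h2
    have := hslopeφ p.1 h2.1 h2.2.le
    linarith
  -- boundedness of the quotients
  obtain ⟨K, hK⟩ := (isCompact_closedBall y (‖d‖ + 2)).exists_bound_of_continuousOn
    hφcont.continuousOn
  have hbddg : ∀ᶠ p : EuclideanSpace ℝ (Fin m) × ℝ in
      (nhds y) ×ˢ (nhdsWithin 0 (Set.Ioi (0:ℝ))),
      |(primalG Z φ Ψ (p.1 + p.2 • d) - primalG Z φ Ψ p.1) / p.2| ≤ 2*K + l*‖d‖ := by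
    have hev1 : ∀ᶠ a in nhds y, a ∈ ball y 1 := ball_mem_nhds y one_pos
    have hev2 : ∀ᶠ t in nhdsWithin (0:ℝ) (Ioi 0), t ∈ Ioo (0:ℝ) 1 :=
      Ioo_mem_nhdsGT_of_mem ⟨le_refl _, one_pos⟩
    filter_upwards [hev1.prod_inl (nhdsWithin (0:ℝ) (Ioi 0)),
      hev2.prod_inr (nhds y)] with p hp1 hp2
    set a := p.1
    set t := p.2
    have ht0 : 0 < t := hp2.1
    have ht1 : t < 1 := hp2.2
    have hay : ‖a - y‖ < 1 := mem_ball_iff_norm.1 hp1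
    -- memberships in the closed ball
    have hmem : ∀ u : ℝ, |u| ≤ 1 → a + u • d ∈ closedBall y (‖d‖ + 2) := by
      intro u hu
      simp only [mem_closedBall, dist_eq_norm]
      have e : a + u • d - y = (a - y) + u • d := by abel
      rw [e]
      calc ‖(a - y) + u • d‖ ≤ ‖a - y‖ + ‖u • d‖ := norm_add_le _ _
        _ = ‖a - y‖ + |u| * ‖d‖ := by rw [norm_smul, Real.norm_eq_abs]
        _ ≤ 1 + 1 * ‖d‖ := by
            have := mul_le_mul_of_nonneg_right hu (norm_nonneg d)
            linarith
        _ ≤ ‖d‖ + 2 := by linarith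
    have hma : a ∈ closedBall y (‖d‖ + 2) := by
      have := hmem 0 (by norm_num)
      simpa using this
    have hK0 : ‖φ a‖ ≤ K := hK a hma
    have hK1 : ‖φ (a + d)‖ ≤ K := by
      have := hK _ (hmem 1 (by norm_num))
      simpa using this
    have hK2 : ‖φ (a - d)‖ ≤ K := by
      have h := hK _ (hmem (-1) (by norm_num))
      have e : a + (-1:ℝ) • d = a - d := by simp [neg_smul, sub_eq_add_neg]
      rwa [e] at h
    have hupper : (φ (a + t • d) - φ a) / t ≤ φ (a + d) - φ a := by
      have h := hslopeφ a ht0 ht1.le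
      simpa using h
    have hlower : φ a - φ (a - d) ≤ (φ (a + t • d) - φ a) / t := hslopeφ_lower a ht0
    have hφb : |(φ (a + t • d) - φ a) / t| ≤ 2*K := by
      rw [abs_le]
      rw [Real.norm_eq_abs] at hK0 hK1 hK2
      constructor
      · have h1 := (abs_le.1 hK0).1
        have h2 := (abs_le.1 hK2).2
        linarith
      · have h1 := (abs_le.1 hK0).1
        have h2 := (abs_le.1 hK1).2
        linarith
    have hMquot : ∀ i, |(M i (a + t • d) - M i a) / t| ≤ l * ‖d‖ := by
      intro i
      rw [abs_div, abs_of_pos ht0, div_le_iff₀ ht0]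
      calc |M i (a + t • d) - M i a| ≤ l * ‖a + t • d - a‖ := hMabs i a (a + t • d)
        _ = l * (t * ‖d‖) := by
            rw [add_sub_cancel_left, norm_smul, Real.norm_eq_abs, abs_of_pos ht0]
        _ = l * ‖d‖ * t := by ring
    rw [hdec a t]
    have hsum : |∑ i, (M i (a + t • d) - M i a) / t| ≤ (n:ℝ) * (l * ‖d‖) := by
      calc |∑ i, (M i (a + t • d) - M i a) / t|
          ≤ ∑ i, |(M i (a + t • d) - M i a) / t| := Finset.abs_sum_le_sum_abs _ _
        _ ≤ ∑ _i : Fin n, l * ‖d‖ := Finset.sum_le_sum (fun i _ => hMquot i)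
        _ = (n:ℝ) * (l * ‖d‖) := by
            rw [Finset.sum_const, Finset.card_univ, Fintype.card_fin, nsmul_eq_mul]
    calc |(φ (a + t • d) - φ a) / t + (1 / (n:ℝ)) * ∑ i, (M i (a + t • d) - M i a) / t|
        ≤ |(φ (a + t • d) - φ a) / t| + |(1 / (n:ℝ)) * ∑ i, (M i (a + t • d) - M i a) / t| :=
          abs_add_le _ _
      _ ≤ 2*K + (1 / (n:ℝ)) * ((n:ℝ) * (l * ‖d‖)) := by
          have h1 : |(1 / (n:ℝ)) * ∑ i, (M i (a + t • d) - M i a) / t|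
              = (1 / (n:ℝ)) * |∑ i, (M i (a + t • d) - M i a) / t| := by
            rw [abs_mul, abs_of_nonneg (by positivity : (0:ℝ) ≤ 1 / (n:ℝ))]
          rw [h1]
          exact add_le_add hφb (mul_le_mul_of_nonneg_left hsum (by positivity))
      _ = 2*K + l*‖d‖ := by field_simp
  -- key inequality for g
  have hkeyg : ∀ ε > (0:ℝ), ∃ δ > (0:ℝ), ∀ s ∈ Ioo (0:ℝ) δ,
      ∀ᶠ p : EuclideanSpace ℝ (Fin m) × ℝ in (nhds y) ×ˢ (nhdsWithin 0 (Set.Ioi (0:ℝ))),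
        (primalG Z φ Ψ (p.1 + p.2 • d) - primalG Z φ Ψ p.1) / p.2
          ≤ (primalG Z φ Ψ (y + s • d) - primalG Z φ Ψ y) / s + ε := by
    intro ε hε
    obtain ⟨δ0, hδ0, h0⟩ := keyφ (ε/2) (by positivity)
    choose δM hδM hkM using fun i => keyM i (ε/2) (by positivity)
    set δ := min δ0 (Finset.univ.inf' Finset.univ_nonempty δM) with hδdef
    have hδpos : 0 < δ :=
      lt_min hδ0 ((Finset.lt_inf'_iff _).2 fun i _ => hδM i)
    refine ⟨δ, hδpos, ?_⟩
    intro s hs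
    have hs0 : s ∈ Ioo (0:ℝ) δ0 := ⟨hs.1, lt_of_lt_of_le hs.2 (min_le_left _ _)⟩
    have hsi : ∀ i, s ∈ Ioo (0:ℝ) (δM i) := fun i =>
      ⟨hs.1, lt_of_lt_of_le hs.2 ((min_le_right _ _).trans
        (Finset.inf'_le _ (Finset.mem_univ i)))⟩
    have hall : ∀ᶠ p : EuclideanSpace ℝ (Fin m) × ℝ in
        (nhds y) ×ˢ (nhdsWithin 0 (Set.Ioi (0:ℝ))),
        ∀ i, (M i (p.1 + p.2 • d) - M i p.1) / p.2 ≤ (M i (y + s • d) - M i y) / s + ε/2 :=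
      eventually_all.2 fun i => hkM i s (hsi i)
    filter_upwards [h0 s hs0, hall] with p h1 h2
    rw [hdec p.1 p.2, hdec y s]
    have hsum : (1 / (n:ℝ)) * ∑ i, (M i (p.1 + p.2 • d) - M i p.1) / p.2
        ≤ (1 / (n:ℝ)) * ∑ i, (M i (y + s • d) - M i y) / s + ε/2 := by
      have h3 : ∑ i, (M i (p.1 + p.2 • d) - M i p.1) / p.2
          ≤ ∑ i, ((M i (y + s • d) - M i y) / s + ε/2) :=
        Finset.sum_le_sum (fun i _ => h2 i)
      have h4 : ∑ i, ((M i (y + s • d) - M i y) / s + ε/2)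
          = (∑ i, (M i (y + s • d) - M i y) / s) + (n:ℝ) * (ε/2) := by
        rw [Finset.sum_add_distrib, Finset.sum_const, Finset.card_univ, Fintype.card_fin,
          nsmul_eq_mul]
      have h5 := mul_le_mul_of_nonneg_left (h3.trans (le_of_eq h4))
        (by positivity : (0:ℝ) ≤ 1 / (n:ℝ))
      have h6 : (1 / (n:ℝ)) * ((∑ i, (M i (y + s • d) - M i y) / s) + (n:ℝ) * (ε/2))
          = (1 / (n:ℝ)) * (∑ i, (M i (y + s • d) - M i y) / s) + ε/2 := by
        field_simp
      linarith [h5, h6]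
    linarith
  exact clarke_key_abstract (primalG Z φ Ψ) y d (2*K + l*‖d‖) hbddg hkeyg
end

section
/- Let H be a finite-dimensional real inner product space, let L > 0, let F : H → ℝ be differentiable everywhere with gradient ∇F that is L-Lipschitz continuous, and let φ : H → ℝ be convex. Suppose y, y⁺, G, γ ∈ H satisfy the subgradient inequality φ(z) ≥ φ(y⁺) + ⟨γ, z − y⁺⟩ for all z ∈ H and the proximal optimality condition L·(y⁺ − y) + G + γ = 0. Then F(y⁺) + φ(y⁺) − (F(y) + φ(y)) ≤ −(L/4)·‖y⁺ − y‖² + (1/L)·‖∇F(y) − G‖². -/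
open RealInnerProductSpace

lemma descent_lemma {H : Type*}
    [NormedAddCommGroup H] [InnerProductSpace ℝ H] [CompleteSpace H]
    (L : ℝ) (hL : 0 < L)
    (F : H → ℝ) (F' : H → H)
    (hF : ∀ x, HasGradientAt F (F' x) x)
    (hLip : ∀ a b : H, ‖F' a - F' b‖ ≤ L * ‖a - b‖)
    (y d : H) : F (y + d) ≤ F y + ⟪F' y, d⟫ + L / 2 * ‖d‖ ^ 2 := by
  set g : ℝ → ℝ := fun t => F (y + t • d) - t * ⟪F' y, d⟫ - t ^ 2 * (L / 2) * ‖d‖ ^ 2 with hg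
  have hderiv : ∀ t : ℝ, HasDerivAt g
      (⟪F' (y + t • d), d⟫ - ⟪F' y, d⟫ - t * L * ‖d‖ ^ 2) t := by
    intro t
    have hline : HasDerivAt (fun t : ℝ => y + t • d) d t := by
      simpa using (hasDerivAt_id t).smul_const d |>.const_add y
    have h1 : HasDerivAt (fun t : ℝ => F (y + t • d)) (⟪F' (y + t • d), d⟫) t := by
      have := ((hF (y + t • d)).hasFDerivAt.comp_hasDerivAt t hline)
      simp [InnerProductSpace.toDual] at this; exact this
    have h2 : HasDerivAt (fun t : ℝ => t * ⟪F' y, d⟫) (⟪F' y, d⟫) t := by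
      simpa using (hasDerivAt_id t).mul_const (⟪F' y, d⟫)
    have h3 : HasDerivAt (fun t : ℝ => t ^ 2 * (L / 2) * ‖d‖ ^ 2)
        (t * L * ‖d‖ ^ 2) t := by
      have := ((hasDerivAt_pow 2 t).mul_const (L / 2)).mul_const (‖d‖ ^ 2)
      convert this using 1
      · rfl
      · rfl
      · ring
    exact (h1.sub h2).sub h3
  have hanti : AntitoneOn g (Set.Icc (0:ℝ) 1) := by
    apply antitoneOn_of_deriv_nonpos (convex_Icc 0 1)
    · exact fun t _ => ((hderiv t).continuousAt).continuousWithinAt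
    · exact fun t _ => (hderiv t).differentiableAt.differentiableWithinAt
    · intro t ht
      rw [interior_Icc] at ht
      rw [(hderiv t).deriv]
      have hb : ⟪F' (y + t • d), d⟫ - ⟪F' y, d⟫ ≤ t * L * ‖d‖ ^ 2 := by
        have := real_inner_le_norm (F' (y + t • d) - F' y) d
        have h2 := hLip (y + t • d) y
        simp only [add_sub_cancel_left] at h2
        rw [norm_smul, Real.norm_eq_abs, abs_of_pos ht.1] at h2
        calc ⟪F' (y + t • d), d⟫ - ⟪F' y, d⟫ = ⟪F' (y + t • d) - F' y, d⟫ := by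
              rw [inner_sub_left]
          _ ≤ ‖F' (y + t • d) - F' y‖ * ‖d‖ := real_inner_le_norm _ _
          _ ≤ (L * (t * ‖d‖)) * ‖d‖ := by
              apply mul_le_mul_of_nonneg_right h2 (norm_nonneg d)
          _ = t * L * ‖d‖ ^ 2 := by ring
      linarith
  have := hanti (Set.left_mem_Icc.mpr zero_le_one) (Set.right_mem_Icc.mpr zero_le_one)
    zero_le_one
  simp only [hg] at this
  simp only [zero_smul, add_zero, zero_mul, zero_pow, one_smul, one_mul, one_pow,
    sub_zero] at this
  linarith [this]

/-- one-step sufficient decrease for the inexact proximal gradient update: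
if `γ` is a subgradient of the convex function `φ` at `y⁺` and
`L (y⁺ − y) + G + γ = 0`, then
`F(y⁺) + φ(y⁺) − (F(y) + φ(y)) ≤ −(L/4)‖y⁺ − y‖² + (1/L)‖∇F(y) − G‖²`. -/
theorem prox_grad_sufficient_decrease {H : Type*}
    [NormedAddCommGroup H] [InnerProductSpace ℝ H] [FiniteDimensional ℝ H]
    (L : ℝ) (hL : 0 < L)
    (F : H → ℝ) (F' : H → H)
    (hF : ∀ x, HasGradientAt F (F' x) x)
    (hLip : ∀ a b : H, ‖F' a - F' b‖ ≤ L * ‖a - b‖)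
    (φ : H → ℝ) (hφ : ConvexOn ℝ Set.univ φ)
    (y yp G γ : H)
    (hsub : ∀ z : H, φ yp + ⟪γ, z - yp⟫ ≤ φ z)
    (hopt : L • (yp - y) + G + γ = 0) :
    F yp + φ yp - (F y + φ y)
      ≤ -(L / 4) * ‖yp - y‖ ^ 2 + (1 / L) * ‖F' y - G‖ ^ 2 := by
  set d := yp - y with hd
  have hF_desc : F yp ≤ F y + ⟪F' y, d⟫ + L / 2 * ‖d‖ ^ 2 := by
    have := descent_lemma L hL F F' hF hLip y d
    simpa [hd] using this
  have hφ_sub : φ yp - φ y ≤ -⟪γ, y - yp⟫ := by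
    have := hsub y; linarith
  have hγ : γ = -(L • d) - G := by
    have : L • d + G + γ = 0 := hopt
    linear_combination (norm := module) this
  have hinner : -⟪γ, y - yp⟫ = -L * ‖d‖ ^ 2 - ⟪G, d⟫ := by
    have hyyp : y - yp = -d := by simp [hd]
    rw [hyyp, hγ]
    simp [inner_sub_left, inner_neg_left, inner_neg_right, inner_smul_left,
      real_inner_self_eq_norm_sq]
    ring
  have hcs : ⟪F' y - G, d⟫ ≤ (1 / L) * ‖F' y - G‖ ^ 2 + (L / 4) * ‖d‖ ^ 2 := by
    have h1 : ⟪F' y - G, d⟫ ≤ ‖F' y - G‖ * ‖d‖ := real_inner_le_norm _ _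
    have key : L * ⟪F' y - G, d⟫ ≤ ‖F' y - G‖ ^ 2 + L ^ 2 / 4 * ‖d‖ ^ 2 := by
      nlinarith [sq_nonneg (‖F' y - G‖ - L / 2 * ‖d‖),
        mul_le_mul_of_nonneg_left h1 hL.le]
    have h2 : ⟪F' y - G, d⟫ ≤ (‖F' y - G‖ ^ 2 + L ^ 2 / 4 * ‖d‖ ^ 2) / L :=
      (le_div_iff₀ hL).mpr (by linarith [key])
    have h3 : (‖F' y - G‖ ^ 2 + L ^ 2 / 4 * ‖d‖ ^ 2) / L
        = (1 / L) * ‖F' y - G‖ ^ 2 + (L / 4) * ‖d‖ ^ 2 := by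
      field_simp
    linarith [h2, h3.ge, h3.le]
  have hsplit : ⟪F' y, d⟫ = ⟪F' y - G, d⟫ + ⟪G, d⟫ := by
    rw [inner_sub_left]; ring
  linarith
end

section
/- Let H be a finite-dimensional real inner product space, let L > 0, let F : H → ℝ be differentiable everywhere with gradient ∇F that is L-Lipschitz continuous, and let φ : H → ℝ be convex. Suppose y, y⁺, G, γ ∈ H satisfy the subgradient inequality φ(z) ≥ φ(y⁺) + ⟨γ, z − y⁺⟩ for all z ∈ H and the proximal optimality condition L·(y⁺ − y) + G + γ = 0. Then ‖∇F(y⁺) + γ‖² ≤ 18 L · ( F(y) + φ(y) − F(y⁺) − φ(y⁺) ) + 28 · ‖∇F(y) − G‖². -/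
open RealInnerProductSpace

/-- Descent lemma: a function with `L`-Lipschitz gradient satisfies the quadratic
upper bound `F b ≤ F a + ⟪∇F a, b - a⟫ + (L/2) ‖b - a‖²`. -/
lemma descent_lemma_aux {H : Type*}
    [NormedAddCommGroup H] [InnerProductSpace ℝ H] [CompleteSpace H]
    (L : ℝ) (hL : 0 < L)
    (F : H → ℝ) (F' : H → H)
    (hF : ∀ x, HasGradientAt F (F' x) x)
    (hLip : ∀ a b : H, ‖F' a - F' b‖ ≤ L * ‖a - b‖)
    (a b : H) :
    F b ≤ F a + ⟪F' a, b - a⟫ + L / 2 * ‖b - a‖ ^ 2 := by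
  set d := b - a with hd
  -- h t = upper model minus F along segment
  set g : ℝ → ℝ := fun t => F (a + t • d) with hg
  have hgd : ∀ t : ℝ, HasDerivAt g (⟪F' (a + t • d), d⟫) t := by
    intro t
    have hc : HasDerivAt (fun t : ℝ => a + t • d) d t := by
      simpa using ((hasDerivAt_id t).smul_const d).const_add a
    have := (hF (a + t • d)).hasFDerivAt.comp_hasDerivAt t hc
    simp [InnerProductSpace.toDual_apply_apply] at this
    exact this
  set h : ℝ → ℝ := fun t =>
    F a + t * ⟪F' a, d⟫ + L / 2 * t ^ 2 * ‖d‖ ^ 2 - g t with hh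
  have hhd : ∀ t : ℝ, HasDerivAt h
      (⟪F' a, d⟫ + L / 2 * (2 * t) * ‖d‖ ^ 2 - ⟪F' (a + t • d), d⟫) t := by
    intro t
    have h1 : HasDerivAt (fun t : ℝ => F a + t * ⟪F' a, d⟫ + L / 2 * t ^ 2 * ‖d‖ ^ 2)
        (⟪F' a, d⟫ + L / 2 * (2 * t) * ‖d‖ ^ 2) t := by
      have ha : HasDerivAt (fun t : ℝ => t * ⟪F' a, d⟫) (⟪F' a, d⟫) t := by
        simpa using (hasDerivAt_id t).mul_const (⟪F' a, d⟫)
      have hb : HasDerivAt (fun t : ℝ => L / 2 * t ^ 2 * ‖d‖ ^ 2)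
          (L / 2 * (2 * t) * ‖d‖ ^ 2) t := by
        have hb0 := ((hasDerivAt_pow 2 t).const_mul (L / 2)).mul_const (‖d‖ ^ 2)
        refine hb0.congr_deriv ?_
        push_cast
        ring
      have hab := (ha.const_add (F a)).add hb
      exact hab
    exact h1.sub (hgd t)
  -- h is monotone on [0, 1]
  have hmono : MonotoneOn h (Set.Icc (0 : ℝ) 1) := by
    apply monotoneOn_of_deriv_nonneg (convex_Icc 0 1)
    · exact (Continuous.continuousOn (by
        exact continuous_iff_continuousAt.2 fun t => (hhd t).continuousAt))
    · intro t _
      exact (hhd t).differentiableAt.differentiableWithinAt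
    · intro t ht
      rw [interior_Icc] at ht
      rw [(hhd t).deriv]
      have h2 : ⟪F' (a + t • d) - F' a, d⟫ ≤ ‖F' (a + t • d) - F' a‖ * ‖d‖ :=
        real_inner_le_norm _ _
      have h3 : ‖F' (a + t • d) - F' a‖ ≤ L * (t * ‖d‖) := by
        have := hLip (a + t • d) a
        have ht0 : (0 : ℝ) ≤ t := le_of_lt ht.1
        simpa [norm_smul, abs_of_nonneg ht0, mul_assoc] using this
      have hd0 : (0 : ℝ) ≤ ‖d‖ := norm_nonneg _
      have ht0 : (0 : ℝ) ≤ t := le_of_lt ht.1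
      have h4 : ⟪F' (a + t • d) - F' a, d⟫
          = ⟪F' (a + t • d), d⟫ - ⟪F' a, d⟫ := inner_sub_left _ _ _
      nlinarith [mul_le_mul_of_nonneg_right h3 hd0]
  have h01 : h 0 ≤ h 1 := hmono (by norm_num) (by norm_num) (by norm_num)
  have hg0 : g 0 = F a := by simp [hg]
  have hg1 : g 1 = F b := by simp [hg, hd]
  have h0 : h 0 = 0 := by simp [hh, hg0]
  have h1e : h 1 = F a + ⟪F' a, d⟫ + L / 2 * ‖d‖ ^ 2 - F b := by
    simp [hh, hg1]
  rw [h0, h1e] at h01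
  linarith

/-- stationarity-violation bound for the inexact proximal gradient update:
if `γ` is a subgradient of the convex function `φ` at `y⁺` and
`L (y⁺ − y) + G + γ = 0`, then
`‖∇F(y⁺) + γ‖² ≤ 18 L (F(y) + φ(y) − F(y⁺) − φ(y⁺)) + 28 ‖∇F(y) − G‖²`. -/
theorem prox_grad_stationarity_bound {H : Type*}
    [NormedAddCommGroup H] [InnerProductSpace ℝ H] [FiniteDimensional ℝ H]
    (L : ℝ) (hL : 0 < L)
    (F : H → ℝ) (F' : H → H)
    (hF : ∀ x, HasGradientAt F (F' x) x)
    (hLip : ∀ a b : H, ‖F' a - F' b‖ ≤ L * ‖a - b‖)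
    (φ : H → ℝ) (hφ : ConvexOn ℝ Set.univ φ)
    (y yp G γ : H)
    (hsub : ∀ z : H, φ yp + ⟪γ, z - yp⟫ ≤ φ z)
    (hopt : L • (yp - y) + G + γ = 0) :
    ‖F' yp + γ‖ ^ 2
      ≤ 18 * L * (F y + φ y - F yp - φ yp) + 28 * ‖F' y - G‖ ^ 2 := by
  set d := yp - y with hd
  set a := ‖d‖ with ha
  set e := ‖F' y - G‖ with he
  have hγ : γ = -(L • d) - G := by
    have := hopt
    rw [hd]
    linear_combination (norm := module) hopt
  -- descent lemma
  have hdesc : F yp ≤ F y + ⟪F' y, d⟫ + L / 2 * a ^ 2 :=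
    descent_lemma_aux L hL F F' hF hLip y yp
  -- subgradient inequality at y
  have hsy : φ yp + ⟪γ, y - yp⟫ ≤ φ y := hsub y
  have hinnerγ : ⟪γ, y - yp⟫ = L * a ^ 2 + ⟪G, d⟫ := by
    rw [hγ]
    have : y - yp = -d := by rw [hd]; abel
    rw [this]
    simp only [inner_sub_left, inner_neg_left, inner_neg_right, inner_neg_neg,
      real_inner_smul_left, real_inner_self_eq_norm_sq]
    ring
  -- lower bound on the decrease
  have hΔ : L / 2 * a ^ 2 - e * a ≤ F y + φ y - F yp - φ yp := by
    have hCS : ⟪F' y - G, d⟫ ≤ e * a := by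
      calc ⟪F' y - G, d⟫ ≤ ‖F' y - G‖ * ‖d‖ := real_inner_le_norm _ _
        _ = e * a := rfl
    have hexp : ⟪F' y - G, d⟫ = ⟪F' y, d⟫ - ⟪G, d⟫ := inner_sub_left _ _ _
    rw [hinnerγ] at hsy
    nlinarith
  -- bound on the stationarity vector
  have hv : ‖F' yp + γ‖ ≤ 2 * L * a + e := by
    have hsplit : F' yp + γ = (F' yp - F' y) + (F' y - G) + (-(L • d)) := by
      rw [hγ]; abel
    calc ‖F' yp + γ‖ = ‖(F' yp - F' y) + (F' y - G) + (-(L • d))‖ := by rw [hsplit]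
      _ ≤ ‖(F' yp - F' y) + (F' y - G)‖ + ‖-(L • d)‖ := norm_add_le _ _
      _ ≤ ‖F' yp - F' y‖ + ‖F' y - G‖ + ‖-(L • d)‖ := by
          gcongr; exact norm_add_le _ _
      _ ≤ L * a + e + L * a := by
          gcongr
          · have := hLip yp y
            simpa [hd] using this
          · rw [norm_neg, norm_smul, Real.norm_eq_abs, abs_of_pos hL]
      _ = 2 * L * a + e := by ring
  have ha0 : (0 : ℝ) ≤ a := norm_nonneg _
  have he0 : (0 : ℝ) ≤ e := norm_nonneg _
  have hv0 : (0 : ℝ) ≤ ‖F' yp + γ‖ := norm_nonneg _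
  have hvsq : ‖F' yp + γ‖ ^ 2 ≤ (2 * L * a + e) ^ 2 := by
    have h2 : (0 : ℝ) ≤ 2 * L * a + e := by positivity
    nlinarith
  nlinarith [sq_nonneg (5 * (L * a) - 11 * e), mul_pos hL hL, sq_nonneg e,
    mul_le_mul_of_nonneg_left hΔ (by positivity : (0:ℝ) ≤ 18 * L)]
end
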